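/- arXiv:2310.09879 — 2 statements merged into one kernel-verified Lean document; each statement's English description precedes it below -/
import Mathlib

section
/- Let Ω and Θ be finite sets with |Ω| ≥ 3 and |Θ| ≥ 2, and let φ : Δ(Ω×Θ) → Δ(Ω×Θ) satisfy positivity, continuity, weak signal coherence, and marginality. Then there exists ψ : Ω → ℝ₊₊ such that: (i) for all p ∈ Δ(Ω×Θ) and all ω ∈ Ω, the Ω-marginal satisfies φ(p)(ω) = ψ(ω)·p(ω) / Σ_{ω'} ψ(ω')·p(ω'), where p(ω) = Σ_θ p(ω,θ); and (ii) for all θ ∈ Θ with p(θ) > 0 and all ω ∈ Ω, φ(p)(ω,θ) / φ(p)(θ) = ψ(ω)·p(ω,θ) / Σ_{ω'} ψ(ω')·p(ω',θ), where p(θ) = Σ_ω p(ω,θ) and φ(p)(θ) = Σ_ω φ(p)(ω,θ). -/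
/-!
Marginality lets `φ` act on `Δ(Ω)` through a single map `F`: put `q` on one signal, apply `φ`,
take the `Ω`-marginal. Weak signal coherence, applied to a distribution spread over two signals,
shows that `F` sends every mixture of `q₁` and `q₂` to a proper mixture of `F q₁` and `F q₂`.
With positivity, this makes the odds `F q i / F q j` a function `g_ij` of `q i / q j` alone.
Three-point distributions give the cocycle identity `g_ik (s t) = g_ij s * g_jk t`, and mixing the
midpoints of the edges `[i, j]` and `[k, j]` gives `W l + W (1 - l) = 1` for `W = g_ij / g_ij 1`.
So `W` is positive, multiplicative and additive on `(0, ∞)`, hence the identity, and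
`F q ∝ ψ * q` with `ψ = F (uniform)`. Coherence transfers this to every conditional `φ(p)(·|θ)`.
-/

open Finset

/-- `p` is a probability distribution on the finite set `α`. -/
def IsDist {α : Type*} [Fintype α] (p : α → ℝ) : Prop :=
  (∀ a, 0 ≤ p a) ∧ ∑ a, p a = 1

/-- The conditional `p(·|θ)` of a joint distribution `p ∈ Δ(Ω×Θ)` given signal `θ`. -/
noncomputable def condSignal {Ω Θ : Type*} [Fintype Ω] [DecidableEq Θ]
    (p : Ω × Θ → ℝ) (θ : Θ) : Ω × Θ → ℝ :=
  fun x => if x.2 = θ then p x / ∑ ω, p (ω, θ) else 0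

/-- `φ` is positive: `φ(p)(A) = 0` iff `p(A) = 0` for every event `A ⊆ Ω×Θ`. -/
def PositiveJoint {Ω Θ : Type*} [Fintype Ω] [Fintype Θ]
    (φ : (Ω × Θ → ℝ) → Ω × Θ → ℝ) : Prop :=
  ∀ p, IsDist p → ∀ A : Finset (Ω × Θ), (∑ x ∈ A, φ p x = 0 ↔ ∑ x ∈ A, p x = 0)

/-- `φ` is weakly signal coherent: for every `θ` with `p(θ) > 0`,
`φ(p(·|θ)) = φ(p)(·|θ)`. -/
def WeakSignalCoherent {Ω Θ : Type*} [Fintype Ω] [Fintype Θ] [DecidableEq Θ]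
    (φ : (Ω × Θ → ℝ) → Ω × Θ → ℝ) : Prop :=
  ∀ p, IsDist p → ∀ θ : Θ, 0 < ∑ ω, p (ω, θ) →
    φ (condSignal p θ) = condSignal (φ p) θ

/-- `φ` satisfies marginality: distributions with equal `Ω`-marginals are mapped to
distributions with equal `Ω`-marginals. -/
def Marginality {Ω Θ : Type*} [Fintype Ω] [Fintype Θ]
    (φ : (Ω × Θ → ℝ) → Ω × Θ → ℝ) : Prop :=
  ∀ p p', IsDist p → IsDist p' →
    (∀ ω : Ω, ∑ θ, p (ω, θ) = ∑ θ, p' (ω, θ)) →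
    ∀ ω : Ω, ∑ θ, φ p (ω, θ) = ∑ θ, φ p' (ω, θ)

section Weights

variable {Ω : Type*} [Fintype Ω]

lemma IsDist.exists_pos {q : Ω → ℝ} (hq : IsDist q) : ∃ ω, 0 < q ω := by
  by_contra! h
  have := sum_nonpos fun ω (_ : ω ∈ univ) => h ω
  linarith [hq.2]

lemma IsDist.smul_add_one_sub_smul {q₁ q₂ : Ω → ℝ} (hq₁ : IsDist q₁) (hq₂ : IsDist q₂) {l : ℝ}
    (hl₀ : 0 ≤ l) (hl₁ : l ≤ 1) : IsDist (l • q₁ + (1 - l) • q₂) := by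
  refine ⟨fun ω => ?_, ?_⟩
  · have := hq₁.1 ω
    have := hq₂.1 ω
    simp only [Pi.add_apply, Pi.smul_apply, smul_eq_mul]
    nlinarith
  · simp only [Pi.add_apply, Pi.smul_apply, smul_eq_mul, sum_add_distrib, ← mul_sum, hq₁.2,
      hq₂.2]
    ring

noncomputable def normalized (w : Ω → ℝ) : Ω → ℝ := fun ω => w ω / ∑ ω', w ω'

lemma isDist_normalized {w : Ω → ℝ} (hw : ∀ ω, 0 ≤ w ω) (hs : 0 < ∑ ω, w ω) :
    IsDist (normalized w) :=
  ⟨fun ω => div_nonneg (hw ω) hs.le, by simp only [normalized, ← sum_div, div_self hs.ne']⟩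

lemma normalized_div_normalized {w : Ω → ℝ} (hs : ∑ ω, w ω ≠ 0) (i j : Ω) :
    normalized w i / normalized w j = w i / w j :=
  div_div_div_cancel_right₀ hs _ _

lemma normalized_smul {c : ℝ} (hc : c ≠ 0) (w : Ω → ℝ) : normalized (c • w) = normalized w := by
  ext ω
  simp only [normalized, Pi.smul_apply, smul_eq_mul, ← mul_sum, mul_div_mul_left _ _ hc]

lemma sum_smul_normalized {w : Ω → ℝ} (hs : ∑ ω, w ω ≠ 0) : (∑ ω, w ω) • normalized w = w := by
  ext ω
  simp only [normalized, Pi.smul_apply, smul_eq_mul, mul_div_cancel₀ _ hs]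

lemma IsDist.normalized_eq {q : Ω → ℝ} (hq : IsDist q) : normalized q = q := by
  ext ω
  simp only [normalized, hq.2, div_one]

end Weights

section CauchyEquation

variable {W : ℝ → ℝ}

lemma map_natCast_mul_of_add (hadd : ∀ x y, 0 < x → 0 < y → W (x + y) = W x + W y)
    {x : ℝ} (hx : 0 < x) {n : ℕ} (hn : 1 ≤ n) : W (n * x) = n * W x := by
  induction n, hn using Nat.le_induction with
  | base => simp
  | succ n hn ih =>
    have hnx : 0 < (n : ℝ) * x := mul_pos (by exact_mod_cast hn) hx
    rw [Nat.cast_succ, add_mul, one_mul, hadd _ _ hnx hx, ih, add_mul, one_mul]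

lemma map_ratCast_of_add (hadd : ∀ x y, 0 < x → 0 < y → W (x + y) = W x + W y) (h1 : W 1 = 1)
    {r : ℚ} (hr : 0 < r) : W r = r := by
  obtain ⟨a, ha⟩ := Int.eq_ofNat_of_zero_le (Rat.num_pos.2 hr).le
  have hden : 1 ≤ r.den := r.den_pos
  have ha1 : 1 ≤ a := by have := Rat.num_pos.2 hr; omega
  have hra : (r.den : ℝ) * r = a := by
    have h := Rat.mul_den_eq_num r
    rw [ha] at h
    rw [mul_comm]
    exact_mod_cast h
  have key : (r.den : ℝ) * W r = a := by
    rw [← map_natCast_mul_of_add hadd (by exact_mod_cast hr) hden, hra,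
      ← mul_one (a : ℝ), map_natCast_mul_of_add hadd one_pos ha1, h1]
  rw [← hra] at key
  exact mul_left_cancel₀ (by positivity) key

lemma eq_self_of_add_of_pos (hpos : ∀ x, 0 < x → 0 < W x)
    (hadd : ∀ x y, 0 < x → 0 < y → W (x + y) = W x + W y) (h1 : W 1 = 1)
    {x : ℝ} (hx : 0 < x) : W x = x := by
  have hmono : ∀ y z, 0 < y → y < z → W y < W z := fun y z hy hyz => by
    rw [← add_sub_cancel y z, hadd _ _ hy (sub_pos.2 hyz)]
    linarith [hpos _ (sub_pos.2 hyz)]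
  rcases lt_trichotomy (W x) x with hlt | heq | hgt
  · obtain ⟨r, hWr, hrx⟩ := exists_rat_btwn hlt
    have hr : (0 : ℝ) < r := (hpos x hx).trans hWr
    have := hmono r x hr hrx
    rw [map_ratCast_of_add hadd h1 (by exact_mod_cast hr)] at this
    linarith
  · exact heq
  · obtain ⟨r, hxr, hrW⟩ := exists_rat_btwn hgt
    have hr : (0 : ℝ) < r := hx.trans hxr
    have := hmono x r hx hxr
    rw [map_ratCast_of_add hadd h1 (by exact_mod_cast hr)] at this
    linarith

lemma eq_self_of_mul_of_add_one_sub (hpos : ∀ x, 0 < x → 0 < W x)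
    (hmul : ∀ x y, 0 < x → 0 < y → W (x * y) = W x * W y)
    (hcompl : ∀ l, 0 < l → l < 1 → W l + W (1 - l) = 1) {x : ℝ} (hx : 0 < x) : W x = x := by
  have hadd : ∀ x y, 0 < x → 0 < y → W (x + y) = W x + W y := fun x y hx hy => by
    have hxy : 0 < x + y := add_pos hx hy
    have hl := hcompl (x / (x + y)) (div_pos hx hxy) ((div_lt_one hxy).2 (by linarith))
    rw [one_sub_div hxy.ne', add_sub_cancel_left] at hl
    have hWx : W x = W (x + y) * W (x / (x + y)) := by
      rw [← hmul _ _ hxy (div_pos hx hxy), mul_div_cancel₀ _ hxy.ne']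
    have hWy : W y = W (x + y) * W (y / (x + y)) := by
      rw [← hmul _ _ hxy (div_pos hy hxy), mul_div_cancel₀ _ hxy.ne']
    rw [hWx, hWy, ← mul_add, hl, mul_one]
  have h1 : W 1 = 1 := by
    have := hmul 1 1 one_pos one_pos
    rw [one_mul] at this
    nlinarith [hpos 1 one_pos]
  exact eq_self_of_add_of_pos hpos hadd h1 hx

end CauchyEquation

section MixtureDistortion

variable {Ω : Type*} [Fintype Ω]

structure IsMixtureDistortion (F : (Ω → ℝ) → Ω → ℝ) : Prop where
  isDist : ∀ q, IsDist q → IsDist (F q)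
  eq_zero_iff : ∀ q, IsDist q → ∀ ω, F q ω = 0 ↔ q ω = 0
  mix : ∀ q₁ q₂, IsDist q₁ → IsDist q₂ → ∀ l : ℝ, 0 < l → l < 1 →
    ∃ μ : ℝ, 0 < μ ∧ μ < 1 ∧ F (l • q₁ + (1 - l) • q₂) = μ • F q₁ + (1 - μ) • F q₂

namespace IsMixtureDistortion

variable {F : (Ω → ℝ) → Ω → ℝ} (hF : IsMixtureDistortion F)
include hF

lemma pos {q : Ω → ℝ} (hq : IsDist q) {ω : Ω} (h : 0 < q ω) : 0 < F q ω :=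
  ((hF.isDist q hq).1 ω).lt_of_ne fun h' => h.ne' ((hF.eq_zero_iff q hq ω).1 h'.symm)

lemma ratio_add_eq {w w' : Ω → ℝ} (hw : ∀ ω, 0 ≤ w ω) (hw' : ∀ ω, 0 ≤ w' ω)
    (hs : 0 < ∑ ω, w ω) (hs' : 0 < ∑ ω, w' ω) (hsum : ∑ ω, w ω + ∑ ω, w' ω = 1)
    {i j : Ω} (hi : w' i = 0) (hj : w' j = 0) :
    F (w + w') i / F (w + w') j = F (normalized w) i / F (normalized w) j := by
  have hd := isDist_normalized hw hs
  have hd' := isDist_normalized hw' hs'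
  obtain ⟨μ, hμ, -, hmix⟩ := hF.mix _ _ hd hd' (∑ ω, w ω) hs (by linarith)
  have hsplit : w + w' = (∑ ω, w ω) • normalized w + (1 - ∑ ω, w ω) • normalized w' := by
    rw [← hsum, add_sub_cancel_left, sum_smul_normalized hs.ne', sum_smul_normalized hs'.ne']
  have hvanish : ∀ ω, w' ω = 0 → F (normalized w') ω = 0 := fun ω h =>
    (hF.eq_zero_iff _ hd' ω).2 (by simp [normalized, h])
  simp only [hsplit, hmix, Pi.add_apply, Pi.smul_apply, smul_eq_mul, hvanish i hi,
    hvanish j hj, mul_zero, add_zero]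
  exact mul_div_mul_left _ _ hμ.ne'

end IsMixtureDistortion

variable [DecidableEq Ω]

noncomputable def edgePoint (i j : Ω) (x : ℝ) : Ω → ℝ := normalized (Pi.single i x + Pi.single j 1)

noncomputable def edgeRatio (F : (Ω → ℝ) → Ω → ℝ) (i j : Ω) (x : ℝ) : ℝ :=
  F (edgePoint i j x) i / F (edgePoint i j x) j

lemma isDist_edgePoint (i j : Ω) {x : ℝ} (hx : 0 ≤ x) : IsDist (edgePoint i j x) := by
  have hw : (0 : Ω → ℝ) ≤ Pi.single i x + Pi.single j 1 :=
    add_nonneg (Pi.single_nonneg.2 hx) (Pi.single_nonneg.2 zero_le_one)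
  refine isDist_normalized hw ?_
  simp only [Pi.add_apply, sum_add_distrib, sum_pi_single', mem_univ, if_true]
  linarith

lemma edgePoint_apply_left {i j : Ω} (hij : i ≠ j) (x : ℝ) : edgePoint i j x i = x / (x + 1) := by
  simp [edgePoint, normalized, sum_add_distrib, hij]

lemma edgePoint_apply_right {i j : Ω} (hij : i ≠ j) (x : ℝ) : edgePoint i j x j = 1 / (x + 1) := by
  simp [edgePoint, normalized, sum_add_distrib, hij.symm]

lemma edgePoint_apply_of_ne {i j ω : Ω} (hi : ω ≠ i) (hj : ω ≠ j) (x : ℝ) :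
    edgePoint i j x ω = 0 := by
  simp [edgePoint, normalized, hi, hj]

lemma exists_ne_ne_of_three_le_card (hΩ : 3 ≤ Fintype.card Ω) (i j : Ω) :
    ∃ k, k ≠ i ∧ k ≠ j := by
  obtain ⟨k, -, hk⟩ := exists_mem_notMem_of_card_lt_card (s := {i, j}) (t := univ)
    (by rw [card_univ]; exact card_le_two.trans_lt (by omega))
  exact ⟨k, by simpa [not_or] using hk⟩

namespace IsMixtureDistortion

variable {F : (Ω → ℝ) → Ω → ℝ} (hF : IsMixtureDistortion F)
include hF

lemma edgeRatio_pos {i j : Ω} (hij : i ≠ j) {x : ℝ} (hx : 0 < x) : 0 < edgeRatio F i j x := by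
  have hd := isDist_edgePoint i j hx.le
  exact div_pos (hF.pos hd (by rw [edgePoint_apply_left hij]; positivity))
    (hF.pos hd (by rw [edgePoint_apply_right hij]; positivity))

lemma ratio_eq_edgeRatio {q : Ω → ℝ} (hq : IsDist q) {i j : Ω} (hij : i ≠ j) (hi : 0 < q i)
    (hj : 0 < q j) : F q i / F q j = edgeRatio F i j (q i / q j) := by
  set w : Ω → ℝ := Pi.single i (q i) + Pi.single j (q j) with hw_def
  have hedge : edgePoint i j (q i / q j) = normalized w := by
    have : w = q j • (Pi.single i (q i / q j) + Pi.single j 1) := by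
      rw [smul_add, ← Pi.single_smul, ← Pi.single_smul, smul_eq_mul, smul_eq_mul,
        mul_div_cancel₀ _ hj.ne', mul_one]
    rw [this, normalized_smul hj.ne', edgePoint]
  have hw : 0 ≤ w := add_nonneg (Pi.single_nonneg.2 hi.le) (Pi.single_nonneg.2 hj.le)
  have hs : ∑ ω, w ω = q i + q j := by simp [hw_def, sum_add_distrib]
  set w' := q - w with hw'_def
  have hq_eq : q = w + w' := (add_sub_cancel w q).symm
  have hw'i : w' i = 0 := by simp [hw'_def, hw_def, hij.symm]
  have hw'j : w' j = 0 := by simp [hw'_def, hw_def, hij]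
  have hw' : ∀ ω, 0 ≤ w' ω := fun ω => by
    by_cases hωi : ω = i
    · rw [hωi, hw'i]
    by_cases hωj : ω = j
    · rw [hωj, hw'j]
    simp [hw'_def, hw_def, hωi, hωj, hq.1 ω]
  rw [edgeRatio, hedge]
  rcases (sum_nonneg fun ω (_ : ω ∈ univ) => hw' ω).eq_or_lt with h0 | hs'
  · have : w' = 0 := funext fun ω =>
      (sum_eq_zero_iff_of_nonneg fun ω _ => hw' ω).1 h0.symm ω (mem_univ ω)
    have hqw : q = w := by rw [hq_eq, this, add_zero]
    rw [hqw] at hq ⊢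
    rw [hq.normalized_eq]
  · have hsum : ∑ ω, w ω + ∑ ω, w' ω = 1 := by 
      rw [← sum_add_distrib]
      exact (congrArg (fun f => ∑ ω, f ω) hq_eq).symm.trans hq.2
    rw [hq_eq]
    exact hF.ratio_add_eq hw hw' (by rw [hs]; positivity) hs' hsum hw'i hw'j

lemma edgeRatio_mul {i j k : Ω} (hij : i ≠ j) (hik : i ≠ k) (hjk : j ≠ k) {s t : ℝ} (hs : 0 < s)
    (ht : 0 < t) : edgeRatio F i k (s * t) = edgeRatio F i j s * edgeRatio F j k t := by
  set w : Ω → ℝ := Pi.single i (s * t) + Pi.single j t + Pi.single k 1 with hw_def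
  have hwi : w i = s * t := by simp [hw_def, hij, hik]
  have hwj : w j = t := by simp [hw_def, hij.symm, hjk]
  have hwk : w k = 1 := by simp [hw_def, hik.symm, hjk.symm]
  have hw : ∀ ω, 0 ≤ w ω := fun ω => by
    simp only [hw_def, Pi.add_apply, Pi.single_apply]
    split_ifs <;> positivity
  have hsum : 0 < ∑ ω, w ω := by
    simp only [hw_def, Pi.add_apply, sum_add_distrib, sum_pi_single', mem_univ, if_true]
    positivity
  have hq := isDist_normalized hw hsum
  have hratio := normalized_div_normalized hsum.ne'
  have hpos : ∀ ω, 0 < w ω → 0 < normalized w ω := fun ω h => div_pos h hsum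
  have hqi := hpos i (by rw [hwi]; positivity)
  have hqj := hpos j (by rw [hwj]; positivity)
  have hqk := hpos k (by rw [hwk]; positivity)
  calc edgeRatio F i k (s * t) = F (normalized w) i / F (normalized w) k := by
        rw [hF.ratio_eq_edgeRatio hq hik hqi hqk, hratio, hwi, hwk, div_one]
    _ = F (normalized w) i / F (normalized w) j * (F (normalized w) j / F (normalized w) k) :=
        (div_mul_div_cancel₀ (hF.pos hq hqj).ne').symm
    _ = edgeRatio F i j s * edgeRatio F j k t := by
        rw [hF.ratio_eq_edgeRatio hq hij hqi hqj, hF.ratio_eq_edgeRatio hq hjk hqj hqk, hratio,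
          hratio, hwi, hwj, hwk, mul_div_cancel_right₀ _ ht.ne', div_one]

lemma edgeRatio_mul_mul_edgeRatio_one {i j k : Ω} (hij : i ≠ j) (hik : i ≠ k) (hjk : j ≠ k)
    {s t : ℝ} (hs : 0 < s) (ht : 0 < t) :
    edgeRatio F i j (s * t) * edgeRatio F i j 1 = edgeRatio F i j s * edgeRatio F i j t := by
  have hst := hF.edgeRatio_mul hik hij hjk.symm hs ht
  have hs1 := hF.edgeRatio_mul hij hik hjk hs one_pos
  have h1t := hF.edgeRatio_mul hik.symm hjk.symm hij one_pos ht
  have h11 := hF.edgeRatio_mul hik hij hjk.symm one_pos one_pos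
  have h11' := hF.edgeRatio_mul hij hik hjk one_pos one_pos
  have h11'' := hF.edgeRatio_mul hik.symm hjk.symm hij one_pos one_pos
  simp only [mul_one, one_mul] at hs1 h1t h11 h11' h11''
  have hcycle : edgeRatio F j k 1 * edgeRatio F k i 1 * edgeRatio F i j 1 = 1 := by
    refine mul_left_cancel₀ (hF.edgeRatio_pos hij one_pos).ne' ?_
    linear_combination (-1 : ℝ) * h11 - edgeRatio F k j 1 * h11' -
      edgeRatio F i j 1 * edgeRatio F j k 1 * h11''
  linear_combination edgeRatio F i j 1 * hst + edgeRatio F i j 1 * edgeRatio F k j t * hs1 +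
    edgeRatio F i j 1 * edgeRatio F i j s * edgeRatio F j k 1 * h1t +
    edgeRatio F i j s * edgeRatio F i j t * hcycle

lemma edgeRatio_div_edgeRatio_one_left_eq {i j k : Ω} (hij : i ≠ j) (hik : i ≠ k) (hjk : j ≠ k)
    {t : ℝ} (ht : 0 < t) :
    edgeRatio F k j t / edgeRatio F k j 1 = edgeRatio F i j t / edgeRatio F i j 1 := by
  have h1t := hF.edgeRatio_mul hik.symm hjk.symm hij one_pos ht
  have h11 := hF.edgeRatio_mul hik.symm hjk.symm hij one_pos one_pos
  rw [one_mul] at h1t h11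
  rw [h1t, h11, mul_div_mul_left _ _ (hF.edgeRatio_pos hik.symm one_pos).ne']

lemma edgeRatio_one_sub_div_add {i j k : Ω} (hij : i ≠ j) (hik : i ≠ k) (hjk : j ≠ k) {l : ℝ}
    (hl₀ : 0 < l) (hl₁ : l < 1) :
    edgeRatio F i j (1 - l) / edgeRatio F i j 1 + edgeRatio F k j l / edgeRatio F k j 1 = 1 := by
  have hq₁ := isDist_edgePoint i j zero_le_one
  have hq₂ := isDist_edgePoint k j zero_le_one
  obtain ⟨μ, hμ₀, hμ₁, hmix⟩ := hF.mix _ _ hq₁ hq₂ (1 - l) (by linarith) (by linarith)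
  set z := (1 - l) • edgePoint i j 1 + (1 - (1 - l)) • edgePoint k j 1 with hz_def
  have hz : IsDist z := hq₁.smul_add_one_sub_smul hq₂ (by linarith) (by linarith)
  have hz_apply : ∀ ω, z ω = (1 - l) * edgePoint i j 1 ω + l * edgePoint k j 1 ω := fun ω => by
    simp only [hz_def, sub_sub_cancel, Pi.add_apply, Pi.smul_apply, smul_eq_mul]
  have hzi : z i = (1 - l) / 2 := by
    rw [hz_apply, edgePoint_apply_left hij, edgePoint_apply_of_ne hik hij]
    ring
  have hzj : z j = 1 / 2 := by
    rw [hz_apply, edgePoint_apply_right hij, edgePoint_apply_right hjk.symm]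
    ring
  have hzk : z k = l / 2 := by
    rw [hz_apply, edgePoint_apply_of_ne hik.symm hjk.symm, edgePoint_apply_left hjk.symm]
    ring
  have hFz : ∀ ω, F z ω = μ * F (edgePoint i j 1) ω + (1 - μ) * F (edgePoint k j 1) ω := fun ω =>
    congrFun hmix ω
  have hF₂i : F (edgePoint k j 1) i = 0 :=
    (hF.eq_zero_iff _ hq₂ i).2 (edgePoint_apply_of_ne hik hij 1)
  have hF₁k : F (edgePoint i j 1) k = 0 :=
    (hF.eq_zero_iff _ hq₁ k).2 (edgePoint_apply_of_ne hik.symm hjk.symm 1)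
  have hij' := hF.ratio_eq_edgeRatio hz hij (by rw [hzi]; linarith) (by rw [hzj]; norm_num)
  have hkj' := hF.ratio_eq_edgeRatio hz hjk.symm (by rw [hzk]; linarith) (by rw [hzj]; norm_num)
  rw [hzi, hzj, div_div_div_cancel_right₀ two_ne_zero, div_one] at hij'
  rw [hzk, hzj, div_div_div_cancel_right₀ two_ne_zero, div_one] at hkj'
  have hA := hF.pos hq₁ (ω := i) (by rw [edgePoint_apply_left hij]; norm_num)
  have hB := hF.pos hq₁ (ω := j) (by rw [edgePoint_apply_right hij]; norm_num)
  have hC := hF.pos hq₂ (ω := j) (by rw [edgePoint_apply_right hjk.symm]; norm_num)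
  have hD := hF.pos hq₂ (ω := k) (by rw [edgePoint_apply_left hjk.symm]; norm_num)
  rw [← hij', ← hkj', hFz, hFz, hFz, hF₂i, hF₁k]
  simp only [edgeRatio]
  have : 0 < μ * F (edgePoint i j 1) j + (1 - μ) * F (edgePoint k j 1) j := by
    have : 0 < 1 - μ := by linarith
    positivity
  -- the two normalized odds are the shares of the two summands of `F z j`
  field_simp
  ring

lemma edgeRatio_eq_mul {i j k : Ω} (hij : i ≠ j) (hik : i ≠ k) (hjk : j ≠ k) {x : ℝ}
    (hx : 0 < x) : edgeRatio F i j x = edgeRatio F i j 1 * x := by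
  have h1 := hF.edgeRatio_pos hij one_pos
  have key : edgeRatio F i j x / edgeRatio F i j 1 = x := by
    refine eq_self_of_mul_of_add_one_sub (W := fun x => edgeRatio F i j x / edgeRatio F i j 1)
      (fun y hy => div_pos (hF.edgeRatio_pos hij hy) h1) (fun y z hy hz => ?_)
      (fun l hl₀ hl₁ => ?_) hx
    · rw [div_mul_div_comm, ← hF.edgeRatio_mul_mul_edgeRatio_one hij hik hjk hy hz,
        mul_div_mul_right _ _ h1.ne']
    · have := hF.edgeRatio_one_sub_div_add hij hik hjk hl₀ hl₁
      rw [hF.edgeRatio_div_edgeRatio_one_left_eq hij hik hjk hl₀] at this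
      linarith
  rw [div_eq_iff h1.ne'] at key
  rw [key, mul_comm]

lemma eq_normalized_of_edgeRatio_one (hΩ : 3 ≤ Fintype.card Ω) {ψ : Ω → ℝ} (hψ : ∀ ω, 0 < ψ ω)
    (hψ₁ : ∀ i j, i ≠ j → edgeRatio F i j 1 = ψ i / ψ j) {q : Ω → ℝ} (hq : IsDist q) :
    F q = normalized (ψ * q) := by
  have hcross : ∀ i j, F q i * (ψ j * q j) = F q j * (ψ i * q i) := by
    intro i j
    rcases eq_or_ne i j with rfl | hij
    · ring
    rcases (hq.1 i).eq_or_lt with hi | hi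
    · rw [← hi, (hF.eq_zero_iff q hq i).2 hi.symm]
      ring
    rcases (hq.1 j).eq_or_lt with hj | hj
    · rw [← hj, (hF.eq_zero_iff q hq j).2 hj.symm]
      ring
    obtain ⟨k, hki, hkj⟩ := exists_ne_ne_of_three_le_card hΩ i j
    have h := hF.ratio_eq_edgeRatio hq hij hi hj
    rw [hF.edgeRatio_eq_mul hij hki.symm hkj.symm (div_pos hi hj), hψ₁ i j hij,
      div_eq_iff (hF.pos hq hj).ne'] at h
    have := (hψ j).ne'
    rw [h]
    field_simp
  have hS : 0 < ∑ ω, ψ ω * q ω := by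
    obtain ⟨ω, hω⟩ := hq.exists_pos
    exact sum_pos' (fun ω _ => mul_nonneg (hψ ω).le (hq.1 ω)) ⟨ω, mem_univ ω, mul_pos (hψ ω) hω⟩
  ext i
  simp only [normalized, Pi.mul_apply]
  rw [eq_div_iff hS.ne', mul_sum]
  calc ∑ j, F q i * (ψ j * q j) = ∑ j, F q j * (ψ i * q i) := sum_congr rfl fun j _ => hcross i j
    _ = ψ i * q i := by rw [← sum_mul, (hF.isDist q hq).2, one_mul]

theorem exists_weights (hΩ : 3 ≤ Fintype.card Ω) :
    ∃ ψ : Ω → ℝ, (∀ ω, 0 < ψ ω) ∧ ∀ q, IsDist q → F q = normalized (ψ * q) := by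
  have hΩ₀ : (0 : ℝ) < Fintype.card Ω := by exact_mod_cast (show 0 < Fintype.card Ω by omega)
  have hu : IsDist (normalized (1 : Ω → ℝ)) :=
    isDist_normalized (fun _ => zero_le_one) (by simpa using hΩ₀)
  have hu₀ : ∀ ω, 0 < normalized (1 : Ω → ℝ) ω := fun ω => div_pos one_pos (by simpa using hΩ₀)
  have hψ : ∀ ω, 0 < F (normalized 1) ω := fun ω => hF.pos hu (hu₀ ω)
  refine ⟨F (normalized 1), hψ, fun q hq => hF.eq_normalized_of_edgeRatio_one hΩ hψ ?_ hq⟩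
  intro i j hij
  have h := hF.ratio_eq_edgeRatio hu hij (hu₀ i) (hu₀ j)
  rwa [normalized_div_normalized (by simpa using hΩ₀.ne'), Pi.one_apply, Pi.one_apply, div_one,
    eq_comm] at h

end IsMixtureDistortion

end MixtureDistortion

section Joint

variable {Ω Θ : Type*} [Fintype Θ]

def marginal (p : Ω × Θ → ℝ) : Ω → ℝ := fun ω => ∑ θ, p (ω, θ)

def liftSignal [DecidableEq Θ] (θ : Θ) (q : Ω → ℝ) : Ω × Θ → ℝ :=
  fun x => if x.2 = θ then q x.1 else 0

lemma marginal_liftSignal [DecidableEq Θ] (θ : Θ) (q : Ω → ℝ) :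
    marginal (liftSignal θ q) = q := by
  ext ω
  simp [marginal, liftSignal]

variable [Fintype Ω]

lemma sum_marginal (p : Ω × Θ → ℝ) : ∑ ω, marginal p ω = ∑ x, p x :=
  (Fintype.sum_prod_type p).symm

lemma IsDist.marginal {p : Ω × Θ → ℝ} (hp : IsDist p) : IsDist (marginal p) :=
  ⟨fun ω => sum_nonneg fun θ _ => hp.1 (ω, θ), (sum_marginal p).trans hp.2⟩

variable {φ : (Ω × Θ → ℝ) → Ω × Θ → ℝ}

lemma apply_eq_zero_of_eq_zero (hpos : PositiveJoint φ) {p : Ω × Θ → ℝ} (hp : IsDist p)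
    {x : Ω × Θ} (hx : p x = 0) : φ p x = 0 := by
  simpa using (hpos p hp {x}).2 (by simpa using hx)

lemma sum_signal_pos (hmap : ∀ p, IsDist p → IsDist (φ p)) (hpos : PositiveJoint φ)
    {p : Ω × Θ → ℝ} (hp : IsDist p) {θ : Θ} (hθ : 0 < ∑ ω, p (ω, θ)) :
    0 < ∑ ω, φ p (ω, θ) := by
  have h := hpos p hp (univ ×ˢ {θ})
  simp only [sum_product, sum_singleton] at h
  exact (sum_nonneg fun ω _ => (hmap p hp).1 _).lt_of_ne fun h0 => hθ.ne' (h.1 h0.symm)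

variable [DecidableEq Θ]

lemma IsDist.liftSignal {q : Ω → ℝ} (hq : IsDist q) (θ : Θ) : IsDist (liftSignal θ q) := by
  refine ⟨fun x => ?_, by rw [← sum_marginal, marginal_liftSignal, hq.2]⟩
  unfold _root_.liftSignal
  split_ifs
  exacts [hq.1 x.1, le_rfl]

lemma marginal_condSignal (g : Ω × Θ → ℝ) (θ : Θ) :
    marginal (condSignal g θ) = fun ω => g (ω, θ) / ∑ ω', g (ω', θ) := by
  ext ω
  simp [marginal, condSignal]

lemma IsDist.condSignal {p : Ω × Θ → ℝ} (hp : IsDist p) {θ : Θ} (hθ : 0 < ∑ ω, p (ω, θ)) :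
    IsDist (condSignal p θ) := by
  refine ⟨fun x => ?_, ?_⟩
  · unfold _root_.condSignal
    split_ifs
    exacts [div_nonneg (hp.1 x) hθ.le, le_rfl]
  · rw [← sum_marginal, marginal_condSignal, ← sum_div, div_self hθ.ne']

variable (φ) in
noncomputable def marginalMap (θ₀ : Θ) (q : Ω → ℝ) : Ω → ℝ := marginal (φ (liftSignal θ₀ q))

lemma isDist_marginalMap (hmap : ∀ p, IsDist p → IsDist (φ p)) (θ₀ : Θ) {q : Ω → ℝ}
    (hq : IsDist q) : IsDist (marginalMap φ θ₀ q) :=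
  (hmap _ (hq.liftSignal θ₀)).marginal

lemma marginal_eq_marginalMap (hmarg : Marginality φ) (θ₀ : Θ) {p : Ω × Θ → ℝ}
    (hp : IsDist p) : marginal (φ p) = marginalMap φ θ₀ (marginal p) :=
  funext <| hmarg p _ hp (hp.marginal.liftSignal θ₀) fun ω =>
    (congrFun (marginal_liftSignal θ₀ (marginal p)) ω).symm

lemma div_sum_signal_eq_marginalMap (hcoh : WeakSignalCoherent φ) (hmarg : Marginality φ)
    (θ₀ : Θ) {p : Ω × Θ → ℝ} (hp : IsDist p) {θ : Θ} (hθ : 0 < ∑ ω, p (ω, θ)) (ω : Ω) :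
    φ p (ω, θ) / ∑ ω', φ p (ω', θ) = marginalMap φ θ₀ (marginal (condSignal p θ)) ω := by
  rw [← marginal_eq_marginalMap hmarg θ₀ (hp.condSignal hθ), hcoh p hp θ hθ,
    marginal_condSignal]

lemma apply_signal_eq_mul_marginalMap (hmap : ∀ p, IsDist p → IsDist (φ p))
    (hpos : PositiveJoint φ) (hcoh : WeakSignalCoherent φ) (hmarg : Marginality φ) (θ₀ : Θ)
    {p : Ω × Θ → ℝ} (hp : IsDist p) {θ : Θ} {c : ℝ} (hc : 0 < c) {q : Ω → ℝ} (hq : IsDist q)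
    (hpq : ∀ ω, p (ω, θ) = c * q ω) (ω : Ω) :
    φ p (ω, θ) = (∑ ω', φ p (ω', θ)) * marginalMap φ θ₀ q ω := by
  have hθ : ∑ ω, p (ω, θ) = c := by simp only [hpq, ← mul_sum, hq.2, mul_one]
  have hcond : marginal (condSignal p θ) = q := by
    rw [marginal_condSignal, hθ]
    ext ω
    rw [hpq, mul_div_cancel_left₀ _ hc.ne']
  have h := div_sum_signal_eq_marginalMap hcoh hmarg θ₀ hp (hθ ▸ hc) ω
  rwa [hcond, div_eq_iff (sum_signal_pos hmap hpos hp (hθ ▸ hc)).ne', mul_comm] at h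

lemma marginalMap_mix (hmap : ∀ p, IsDist p → IsDist (φ p)) (hpos : PositiveJoint φ)
    (hcoh : WeakSignalCoherent φ) (hmarg : Marginality φ) {θ₁ θ₂ : Θ} (hθ : θ₁ ≠ θ₂) (θ₀ : Θ)
    {q₁ q₂ : Ω → ℝ} (hq₁ : IsDist q₁) (hq₂ : IsDist q₂) {l : ℝ} (hl₀ : 0 < l) (hl₁ : l < 1) :
    ∃ μ : ℝ, 0 < μ ∧ μ < 1 ∧ marginalMap φ θ₀ (l • q₁ + (1 - l) • q₂) =
      μ • marginalMap φ θ₀ q₁ + (1 - μ) • marginalMap φ θ₀ q₂ := by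
  set p := l • liftSignal θ₁ q₁ + (1 - l) • liftSignal θ₂ q₂ with hp_def
  have hp : IsDist p := (hq₁.liftSignal θ₁).smul_add_one_sub_smul (hq₂.liftSignal θ₂) hl₀.le hl₁.le
  have hp₁ : ∀ ω, p (ω, θ₁) = l * q₁ ω := by simp [hp_def, liftSignal, hθ]
  have hp₂ : ∀ ω, p (ω, θ₂) = (1 - l) * q₂ ω := by simp [hp_def, liftSignal, hθ.symm]
  have hp₀ : ∀ ω θ, θ ≠ θ₁ ∧ θ ≠ θ₂ → p (ω, θ) = 0 := fun ω θ h => by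
    simp [hp_def, liftSignal, h.1, h.2]
  set S₁ := ∑ ω, φ p (ω, θ₁)
  set S₂ := ∑ ω, φ p (ω, θ₂)
  have hmix : ∀ ω, marginalMap φ θ₀ (l • q₁ + (1 - l) • q₂) ω =
      S₁ * marginalMap φ θ₀ q₁ ω + S₂ * marginalMap φ θ₀ q₂ ω := fun ω => by
    have hmp : marginal p = l • q₁ + (1 - l) • q₂ := by
      ext ω
      simp [marginal, Fintype.sum_eq_add θ₁ θ₂ hθ (hp₀ ω), hp₁, hp₂]
    rw [← hmp, ← marginal_eq_marginalMap hmarg θ₀ hp, marginal,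
      Fintype.sum_eq_add θ₁ θ₂ hθ fun θ h => apply_eq_zero_of_eq_zero hpos hp (hp₀ ω θ h),
      apply_signal_eq_mul_marginalMap hmap hpos hcoh hmarg θ₀ hp hl₀ hq₁ hp₁,
      apply_signal_eq_mul_marginalMap hmap hpos hcoh hmarg θ₀ hp (sub_pos.2 hl₁) hq₂ hp₂]
  have hS : S₁ + S₂ = 1 := by
    have h := (isDist_marginalMap hmap θ₀ (hq₁.smul_add_one_sub_smul hq₂ hl₀.le hl₁.le)).2
    simpa only [hmix, sum_add_distrib, ← mul_sum, (isDist_marginalMap hmap θ₀ hq₁).2,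
      (isDist_marginalMap hmap θ₀ hq₂).2, mul_one] using h
  have hS₂ : 0 < S₂ := sum_signal_pos hmap hpos hp (by simp [hp₂, ← mul_sum, hq₂.2, hl₁])
  refine ⟨S₁, sum_signal_pos hmap hpos hp (by simp [hp₁, ← mul_sum, hq₁.2, hl₀]), by linarith, ?_⟩
  ext ω
  rw [hmix, ← hS]
  simp only [Pi.add_apply, Pi.smul_apply, smul_eq_mul, add_sub_cancel_left]

lemma isMixtureDistortion_marginalMap (hmap : ∀ p, IsDist p → IsDist (φ p))
    (hpos : PositiveJoint φ) (hcoh : WeakSignalCoherent φ) (hmarg : Marginality φ)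
    {θ₁ θ₂ : Θ} (hθ : θ₁ ≠ θ₂) (θ₀ : Θ) : IsMixtureDistortion (marginalMap φ θ₀) where
  isDist _ := isDist_marginalMap hmap θ₀
  eq_zero_iff q hq ω := by
    have h := hpos _ (hq.liftSignal θ₀) ({ω} ×ˢ univ)
    simp only [sum_product, sum_singleton] at h
    rwa [← congrFun (marginal_liftSignal θ₀ q) ω]
  mix _ _ hq₁ hq₂ _ hl₀ hl₁ := marginalMap_mix hmap hpos hcoh hmarg hθ θ₀ hq₁ hq₂ hl₀ hl₁

end Joint

theorem stmt8_general {Ω Θ : Type*} [Fintype Ω] [Fintype Θ] [DecidableEq Θ]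
    (hΩ : 3 ≤ Fintype.card Ω) (hΘ : 2 ≤ Fintype.card Θ)
    (φ : (Ω × Θ → ℝ) → Ω × Θ → ℝ)
    (hmap : ∀ p, IsDist p → IsDist (φ p))
    (hpos : PositiveJoint φ)
    (hcoh : WeakSignalCoherent φ)
    (hmarg : Marginality φ) :
    ∃ ψ : Ω → ℝ, (∀ ω, 0 < ψ ω) ∧
      (∀ p, IsDist p → ∀ ω : Ω,
        ∑ θ, φ p (ω, θ) =
          ψ ω * (∑ θ, p (ω, θ)) / ∑ ω', ψ ω' * ∑ θ, p (ω', θ)) ∧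
      (∀ p, IsDist p → ∀ θ : Θ, 0 < ∑ ω, p (ω, θ) → ∀ ω : Ω,
        φ p (ω, θ) / (∑ ω', φ p (ω', θ)) =
          ψ ω * p (ω, θ) / ∑ ω', ψ ω' * p (ω', θ)) := by
  classical
  obtain ⟨θ₁, θ₂, hθ⟩ := Fintype.exists_pair_of_one_lt_card (by omega : 1 < Fintype.card Θ)
  obtain ⟨ψ, hψ, hF⟩ :=
    (isMixtureDistortion_marginalMap hmap hpos hcoh hmarg hθ θ₁).exists_weights hΩ
  refine ⟨ψ, hψ, fun p hp ω => ?_, fun p hp θ hθ ω => ?_⟩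
  · exact congrFun ((marginal_eq_marginalMap hmarg θ₁ hp).trans (hF _ hp.marginal)) ω
  · have hweights : ψ * marginal (condSignal p θ) =
        (∑ ω', p (ω', θ))⁻¹ • (ψ * fun ω' => p (ω', θ)) := by
      ext ω'
      simp only [marginal_condSignal, Pi.mul_apply, Pi.smul_apply, smul_eq_mul]
      ring
    rw [div_sum_signal_eq_marginalMap hcoh hmarg θ₁ hp hθ, hF _ (hp.condSignal hθ).marginal,
      hweights, normalized_smul (inv_ne_zero hθ.ne')]
    rfl

/-- **Theorem (first part)**: if `|Ω| ≥ 3`, `|Θ| ≥ 2` and `φ` satisfies positivity,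
continuity, weak signal coherence and marginality, then there is `ψ : Ω → ℝ₊₊` such
that (i) the induced marginal distortion is weighted with weights `ψ`, and (ii) the
conditional-on-`θ` distortion is weighted with weights `ψ` whenever `p(θ) > 0`. -/
theorem stmt8 {Ω Θ : Type*} [Fintype Ω] [Fintype Θ] [DecidableEq Θ]
    (hΩ : 3 ≤ Fintype.card Ω) (hΘ : 2 ≤ Fintype.card Θ)
    (φ : (Ω × Θ → ℝ) → Ω × Θ → ℝ)
    (hmap : ∀ p, IsDist p → IsDist (φ p))
    (hpos : PositiveJoint φ)
    (hcont : ContinuousOn φ {p | IsDist p})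
    (hcoh : WeakSignalCoherent φ)
    (hmarg : Marginality φ) :
    ∃ ψ : Ω → ℝ, (∀ ω, 0 < ψ ω) ∧
      (∀ p, IsDist p → ∀ ω : Ω,
        ∑ θ, φ p (ω, θ) =
          ψ ω * (∑ θ, p (ω, θ)) / ∑ ω', ψ ω' * ∑ θ, p (ω', θ)) ∧
      (∀ p, IsDist p → ∀ θ : Θ, 0 < ∑ ω, p (ω, θ) → ∀ ω : Ω,
        φ p (ω, θ) / (∑ ω', φ p (ω', θ)) =
          ψ ω * p (ω, θ) / ∑ ω', ψ ω' * p (ω', θ)) :=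
  stmt8_general hΩ hΘ φ hmap hpos hcoh hmarg
end

section
/- Let Ω and Θ be finite sets with |Ω| ≥ 3 and |Θ| ≥ 3, and let φ : Δ(Ω×Θ) → Δ(Ω×Θ) satisfy positivity, continuity, strong signal coherence, and marginality. Then there exists ψ : Ω → ℝ₊₊ such that for all p ∈ Δ(Ω×Θ) and all (ω,θ) ∈ Ω×Θ, φ(p)(ω,θ) = ψ(ω)·p(ω,θ) / Σ_{ω',θ'} ψ(ω')·p(ω',θ'). -/
open Finset

/-- The conditional `p(·|S)` of a joint distribution `p ∈ Δ(Ω×Θ)` given the signal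
event `S ⊆ Θ`. -/
noncomputable def condSignalEvent {Ω Θ : Type*} [Fintype Ω] [Fintype Θ] [DecidableEq Θ]
    (p : Ω × Θ → ℝ) (S : Finset Θ) : Ω × Θ → ℝ :=
  fun x => if x.2 ∈ S then p x / ∑ θ ∈ S, ∑ ω, p (ω, θ) else 0

/-- `φ` is strongly signal coherent: for every signal event `S ⊆ Θ` with
`p(Ω×S) > 0`, `φ(p(·|S)) = φ(p)(·|S)`. -/
def StrongSignalCoherent {Ω Θ : Type*} [Fintype Ω] [Fintype Θ] [DecidableEq Θ]
    (φ : (Ω × Θ → ℝ) → Ω × Θ → ℝ) : Prop :=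
  ∀ p, IsDist p → ∀ S : Finset Θ, 0 < ∑ θ ∈ S, ∑ ω, p (ω, θ) →
    φ (condSignalEvent p S) = condSignalEvent (φ p) S

set_option linter.unusedSectionVars false
set_option maxHeartbeats 1000000

namespace S10

variable {α : Type*} [Fintype α]

lemma sum_pair [DecidableEq α] {f : α → ℝ} {a b : α} (hab : a ≠ b)
    (h : ∀ x, x ≠ a → x ≠ b → f x = 0) : ∑ x, f x = f a + f b := by
  have h1 : ∑ x, f x = ∑ x ∈ ({a, b} : Finset α), f x := by
    refine (Finset.sum_subset (Finset.subset_univ _) ?_).symm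
    intro x _ hx
    simp only [Finset.mem_insert, Finset.mem_singleton, not_or] at hx
    exact h x hx.1 hx.2
  rw [h1, Finset.sum_insert (by simp [hab]), Finset.sum_singleton]

lemma sum_triple [DecidableEq α] {f : α → ℝ} {a b c : α} (hab : a ≠ b) (hac : a ≠ c)
    (hbc : b ≠ c)
    (h : ∀ x, x ≠ a → x ≠ b → x ≠ c → f x = 0) : ∑ x, f x = f a + f b + f c := by
  have h1 : ∑ x, f x = ∑ x ∈ ({a, b, c} : Finset α), f x := by
    refine (Finset.sum_subset (Finset.subset_univ _) ?_).symm
    intro x _ hx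
    simp only [Finset.mem_insert, Finset.mem_singleton, not_or] at hx
    exact h x hx.1 hx.2.1 hx.2.2
  rw [h1, Finset.sum_insert (by simp [hab, hac]), Finset.sum_insert (by simp [hbc]),
    Finset.sum_singleton, add_assoc]

lemma exists_third (hcard : 3 ≤ Fintype.card α) (a b : α) : ∃ c, c ≠ a ∧ c ≠ b := by
  classical
  by_contra hc
  push_neg at hc
  have hsub : (Finset.univ : Finset α) ⊆ {a, b} := by
    intro x _
    by_cases hxa : x = a
    · simp [hxa]
    · simp [hc x hxa]
  have h2 := Finset.card_le_card hsub
  simp only [Finset.card_univ] at h2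
  have h3 : Fintype.card α ≤ 2 := h2.trans ((Finset.card_insert_le _ _).trans (by simp))
  omega

lemma exists_triple (hcard : 3 ≤ Fintype.card α) :
    ∃ a b c : α, a ≠ b ∧ a ≠ c ∧ b ≠ c := by
  have h1 : 1 < Fintype.card α := by omega
  obtain ⟨a, b, hab⟩ := Fintype.exists_pair_of_one_lt_card h1
  obtain ⟨c, hca, hcb⟩ := exists_third hcard a b
  exact ⟨a, b, c, hab, Ne.symm hca, Ne.symm hcb⟩

lemma sum_pos_exists {f : α → ℝ} (h0 : ∀ x, 0 ≤ f x) (h : 0 < ∑ x, f x) :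
    ∃ x, 0 < f x := by
  by_contra hc
  push_neg at hc
  have : ∀ x, f x = 0 := fun x => le_antisymm (hc x) (h0 x)
  simp [this] at h

lemma wsum_pos {f g : α → ℝ} (hg : ∀ x, 0 < g x) (h0 : ∀ x, 0 ≤ f x)
    (h : 0 < ∑ x, f x) : 0 < ∑ x, g x * f x := by
  obtain ⟨x, hx⟩ := sum_pos_exists h0 h
  refine Finset.sum_pos' (fun y _ => mul_nonneg (hg y).le (h0 y)) ⟨x, Finset.mem_univ x, ?_⟩
  exact mul_pos (hg x) hx

/-- An additive, positive function on the positive reals is linear. -/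
lemma additive_pos_linear {f : ℝ → ℝ}
    (hadd : ∀ u v : ℝ, 0 < u → 0 < v → f (u + v) = f u + f v)
    (hpos : ∀ u : ℝ, 0 < u → 0 < f u) :
    ∀ r : ℝ, 0 < r → f r = f 1 * r := by
  have hmono : ∀ u v : ℝ, 0 < u → u < v → f u < f v := by
    intro u v hu huv
    have : f v = f u + f (v - u) := by
      have := hadd u (v - u) hu (by linarith)
      simpa using this
    have := hpos (v - u) (by linarith)
    linarith
  have hnat : ∀ n : ℕ, ∀ u : ℝ, 0 < u → f (((n:ℝ) + 1) * u) = ((n:ℝ) + 1) * f u := by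
    intro n
    induction n with
    | zero => intro u hu; simp
    | succ k ih =>
      intro u hu
      have h1 : (((k+1:ℕ):ℝ) + 1) * u = ((k:ℝ) + 1) * u + u := by push_cast; ring
      rw [h1, hadd _ u (by positivity) hu, ih u hu]
      push_cast; ring
  have hq : ∀ (m n : ℕ), 0 < m → 0 < n → f ((m:ℝ)/n) = (m:ℝ)/n * f 1 := by
    intro m n hm0 hn0
    have hden : (0:ℝ) < ((n:ℝ))⁻¹ := by positivity
    have h1 : f ((m : ℝ) * ((n:ℝ))⁻¹) = (m : ℝ) * f (((n:ℝ))⁻¹) := by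
      obtain ⟨m', rfl⟩ : ∃ m', m = m' + 1 := ⟨m - 1, by omega⟩
      have h2 := hnat m' (((n:ℝ))⁻¹) hden
      push_cast at h2 ⊢
      simpa using h2
    have h2 : f 1 = (n : ℝ) * f (((n:ℝ))⁻¹) := by
      obtain ⟨n', rfl⟩ : ∃ n', n = n' + 1 := ⟨n - 1, by omega⟩
      have h3 := hnat n' (((n':ℕ):ℝ) + 1)⁻¹ (by positivity)
      rw [mul_inv_cancel₀ (by positivity)] at h3
      push_cast at h3 ⊢
      simpa using h3
    rw [div_eq_mul_inv, h1, h2]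
    have hne : (n:ℝ) ≠ 0 := by positivity
    field_simp
  have hqq : ∀ q : ℚ, 0 < q → f ((q:ℝ)) = (q:ℝ) * f 1 := by
    intro q hq0
    have hnum : 0 < q.num := Rat.num_pos.mpr hq0
    have hqval : (q : ℝ) = ((q.num.toNat : ℕ) : ℝ) / (q.den : ℝ) := by
      rw [Rat.cast_def]
      congr 1
      exact_mod_cast (Int.toNat_of_nonneg hnum.le).symm
    rw [hqval, hq _ _ (by omega) q.den_pos]
  intro r hr
  have hf1 : 0 < f 1 := hpos 1 one_pos
  have hub : ∀ q : ℚ, 0 < (q:ℝ) → (q:ℝ) < r → (q:ℝ) * f 1 ≤ f r := by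
    intro q h1 h2
    rw [← hqq q (by exact_mod_cast h1)]
    exact (hmono _ _ h1 h2).le
  have hlb : ∀ q : ℚ, r < (q:ℝ) → f r ≤ (q:ℝ) * f 1 := by
    intro q h2
    rw [← hqq q (by exact_mod_cast hr.trans h2)]
    exact (hmono r q hr h2).le
  by_contra hne
  rcases lt_or_gt_of_ne hne with hlt | hgt
  · obtain ⟨q, hq1, hq2⟩ := exists_rat_btwn (show f r / f 1 < r by
      rwa [div_lt_iff₀ hf1, mul_comm])
    have hq0 : 0 < (q:ℝ) := lt_of_le_of_lt (div_nonneg (hpos r hr).le hf1.le) hq1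
    have h3 := hub q hq0 hq2
    rw [div_lt_iff₀ hf1] at hq1
    linarith
  · obtain ⟨q, hq1, hq2⟩ := exists_rat_btwn (show r < f r / f 1 by
      rwa [lt_div_iff₀ hf1, mul_comm])
    have h3 := hlb q hq1
    rw [lt_div_iff₀ hf1] at hq2
    linarith


section Phi

variable {Ω Θ : Type*} [Fintype Ω] [Fintype Θ] [DecidableEq Θ]

def margin (p : Ω × Θ → ℝ) : Ω → ℝ := fun ω => ∑ θ, p (ω, θ)

def tensor (q : Ω → ℝ) (θ₀ : Θ) : Ω × Θ → ℝ := fun x => if x.2 = θ₀ then q x.1 else 0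

variable (φ : (Ω × Θ → ℝ) → Ω × Θ → ℝ)

def Fm (θ₁ : Θ) (q : Ω → ℝ) : Ω → ℝ := fun ω => ∑ θ, φ (tensor q θ₁) (ω, θ)

variable {φ}

lemma zero_iff (hpos : PositiveJoint φ) {p} (hp : IsDist p) (x : Ω × Θ) :
    φ p x = 0 ↔ p x = 0 := by
  have h := hpos p hp {x}
  simpa using h

lemma pos_iff (hmap : ∀ p, IsDist p → IsDist (φ p)) (hpos : PositiveJoint φ)
    {p} (hp : IsDist p) (x : Ω × Θ) : 0 < φ p x ↔ 0 < p x := by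
  have h1 := (hmap p hp).1 x
  have h2 := hp.1 x
  have h3 := zero_iff hpos hp x
  constructor <;> intro h
  · rcases h2.eq_or_lt with he | hl
    · exact absurd (h3.mpr he.symm) (ne_of_gt h)
    · exact hl
  · rcases h1.eq_or_lt with he | hl
    · exact absurd (h3.mp he.symm) (ne_of_gt h)
    · exact hl

lemma margin_isDist {p : Ω × Θ → ℝ} (hp : IsDist p) : IsDist (margin p) := by
  refine ⟨fun ω => Finset.sum_nonneg fun θ _ => hp.1 _, ?_⟩
  rw [← hp.2, Fintype.sum_prod_type]
  rfl

lemma tensor_isDist {q : Ω → ℝ} (hq : IsDist q) (θ₀ : Θ) : IsDist (tensor q θ₀) := by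
  constructor
  · intro x
    unfold tensor
    split
    · exact hq.1 _
    · exact le_refl 0
  · rw [Fintype.sum_prod_type]
    simp [tensor, hq.2]

lemma margin_tensor (q : Ω → ℝ) (θ₀ : Θ) : margin (tensor q θ₀) = q := by
  funext ω
  simp [margin, tensor]

lemma marg_eq (hmarg : Marginality φ) (θ₁ : Θ) {p} (hp : IsDist p) (ω : Ω) :
    ∑ θ, φ p (ω, θ) = Fm φ θ₁ (margin p) ω :=
  hmarg p (tensor (margin p) θ₁) hp (tensor_isDist (margin_isDist hp) θ₁)
    (fun ω => by simp [tensor, margin]) ω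

lemma Fm_eval (hpos : PositiveJoint φ) (hmarg : Marginality φ) (θ₁ : Θ)
    {q : Ω → ℝ} (hq : IsDist q) (θ₀ : Θ) (ω : Ω) :
    φ (tensor q θ₀) (ω, θ₀) = Fm φ θ₁ q ω := by
  have h1 := marg_eq hmarg θ₁ (tensor_isDist hq θ₀) ω
  rw [margin_tensor] at h1
  rw [← h1]
  symm
  apply Finset.sum_eq_single
  · intro θ _ hθ
    exact (zero_iff hpos (tensor_isDist hq θ₀) (ω, θ)).mpr (by simp [tensor, hθ])
  · intro h
    exact absurd (Finset.mem_univ θ₀) h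

lemma Fm_isDist (hmap : ∀ p, IsDist p → IsDist (φ p)) (θ₁ : Θ)
    {q : Ω → ℝ} (hq : IsDist q) : IsDist (Fm φ θ₁ q) := by
  constructor
  · intro ω
    exact Finset.sum_nonneg fun θ _ => (hmap _ (tensor_isDist hq θ₁)).1 _
  · have h := (hmap _ (tensor_isDist hq θ₁)).2
    rw [Fintype.sum_prod_type] at h
    exact h

lemma Fm_zero_iff (hpos : PositiveJoint φ) (hmarg : Marginality φ) (θ₁ : Θ)
    {q : Ω → ℝ} (hq : IsDist q) (ω : Ω) : Fm φ θ₁ q ω = 0 ↔ q ω = 0 := by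
  rw [← Fm_eval hpos hmarg θ₁ hq θ₁ ω, zero_iff hpos (tensor_isDist hq θ₁)]
  simp [tensor]

lemma Fm_pos (hmap : ∀ p, IsDist p → IsDist (φ p)) (hpos : PositiveJoint φ)
    (hmarg : Marginality φ) (θ₁ : Θ)
    {q : Ω → ℝ} (hq : IsDist q) {ω : Ω} (hω : 0 < q ω) : 0 < Fm φ θ₁ q ω := by
  rw [← Fm_eval hpos hmarg θ₁ hq θ₁ ω, pos_iff hmap hpos (tensor_isDist hq θ₁)]
  simpa [tensor] using hω

lemma cond_isDist {p : Ω × Θ → ℝ} (hp : IsDist p) {S : Finset Θ}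
    (hS : 0 < ∑ θ ∈ S, ∑ ω, p (ω, θ)) : IsDist (condSignalEvent p S) := by
  constructor
  · intro x
    unfold condSignalEvent
    split
    · exact div_nonneg (hp.1 x) hS.le
    · exact le_refl 0
  · rw [Fintype.sum_prod_type]
    simp only [condSignalEvent]
    have h1 : ∀ ω : Ω, ∑ θ, (if θ ∈ S then p (ω, θ) / (∑ θ ∈ S, ∑ ω, p (ω, θ)) else 0)
        = (∑ θ ∈ S, p (ω, θ)) / (∑ θ ∈ S, ∑ ω, p (ω, θ)) := by
      intro ω
      rw [Finset.sum_ite_mem, Finset.univ_inter, Finset.sum_div]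
    rw [Finset.sum_congr rfl fun ω _ => h1 ω, ← Finset.sum_div, Finset.sum_comm,
      div_self hS.ne']

lemma condS_eval (hcoh : StrongSignalCoherent φ) {p} (hp : IsDist p) {S : Finset Θ}
    (hS : 0 < ∑ θ ∈ S, ∑ ω, p (ω, θ)) (x : Ω × Θ) (hx : x.2 ∈ S) :
    φ (condSignalEvent p S) x = φ p x / (∑ θ ∈ S, ∑ ω, φ p (ω, θ)) := by
  have h := congrFun (hcoh p hp S hS) x
  rw [h]
  simp [condSignalEvent, hx]

lemma colsum_pos (hmap : ∀ p, IsDist p → IsDist (φ p)) (hpos : PositiveJoint φ)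
    {p} (hp : IsDist p) {θh : Θ} (hm : 0 < ∑ w, p (w, θh)) :
    0 < ∑ w, φ p (w, θh) := by
  obtain ⟨w, hw⟩ := sum_pos_exists (fun w => hp.1 _) hm
  exact Finset.sum_pos' (fun y _ => (hmap p hp).1 _)
    ⟨w, Finset.mem_univ w, (pos_iff hmap hpos hp _).mpr hw⟩

lemma cond_col (hmap : ∀ p, IsDist p → IsDist (φ p)) (hpos : PositiveJoint φ)
    (hcoh : StrongSignalCoherent φ) (hmarg : Marginality φ) (θ₁ : Θ)
    {p} (hp : IsDist p) {θh : Θ} (hm : 0 < ∑ w, p (w, θh)) (ω : Ω) :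
    φ p (ω, θh) = (∑ w, φ p (w, θh)) *
      Fm φ θ₁ (fun w => p (w, θh) / ∑ w', p (w', θh)) ω := by
  have hmass : 0 < ∑ θ ∈ ({θh} : Finset Θ), ∑ w, p (w, θ) := by simpa using hm
  have hq : IsDist (fun w => p (w, θh) / ∑ w', p (w', θh)) :=
    ⟨fun w => div_nonneg (hp.1 _) hm.le, by rw [← Finset.sum_div, div_self hm.ne']⟩
  have htens : condSignalEvent p {θh} = tensor (fun w => p (w, θh) / ∑ w', p (w', θh)) θh := by
    funext x
    obtain ⟨a, b⟩ := x
    simp only [condSignalEvent, tensor, Finset.mem_singleton, Finset.sum_singleton]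
    by_cases hb : b = θh
    · subst hb; simp
    · simp [hb]
  have h1 := condS_eval hcoh hp hmass (ω, θh) (by simp)
  rw [htens, Fm_eval hpos hmarg θ₁ hq θh ω] at h1
  rw [Finset.sum_singleton] at h1
  have hc : 0 < ∑ w, φ p (w, θh) := colsum_pos hmap hpos hp hm
  rw [h1, mul_div_cancel₀ _ hc.ne']


section Edge

variable [DecidableEq Ω]

variable (φ)

def edge (ω₁ ω₂ : Ω) (t : ℝ) : Ω → ℝ :=
  fun ω => if ω = ω₁ then t else if ω = ω₂ then 1 - t else 0

noncomputable def gg (θ₁ : Θ) (ω₁ ω₂ : Ω) (t : ℝ) : ℝ := Fm φ θ₁ (edge ω₁ ω₂ t) ω₁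

noncomputable def hh (θ₁ : Θ) (ω₁ ω₂ : Ω) (r : ℝ) : ℝ :=
  gg φ θ₁ ω₁ ω₂ (r / (1 + r)) / (1 - gg φ θ₁ ω₁ ω₂ (r / (1 + r)))

noncomputable def kap (θ₁ : Θ) (ω₁ ω₂ : Ω) : ℝ := hh φ θ₁ ω₁ ω₂ 1

variable {φ}

lemma edge_isDist {ω₁ ω₂ : Ω} (h : ω₁ ≠ ω₂) {t : ℝ} (h0 : 0 ≤ t) (h1 : t ≤ 1) :
    IsDist (edge ω₁ ω₂ t) := by
  constructor
  · intro ω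
    unfold edge
    split
    · exact h0
    · split
      · linarith
      · exact le_refl 0
  · rw [sum_pair h (fun x hx1 hx2 => by simp [edge, hx1, hx2])]
    simp [edge, Ne.symm h]

lemma edge_val₁ (ω₁ ω₂ : Ω) (t : ℝ) : edge ω₁ ω₂ t ω₁ = t := by simp [edge]

lemma edge_val₂ {ω₁ ω₂ : Ω} (h : ω₁ ≠ ω₂) (t : ℝ) : edge ω₁ ω₂ t ω₂ = 1 - t := by
  simp [edge, Ne.symm h]

lemma Fm_edge_pair (hmap : ∀ p, IsDist p → IsDist (φ p)) (hpos : PositiveJoint φ)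
    (hmarg : Marginality φ) (θ₁ : Θ) {ω₁ ω₂ : Ω} (hω : ω₁ ≠ ω₂) {t : ℝ}
    (h0 : 0 ≤ t) (h1 : t ≤ 1) :
    Fm φ θ₁ (edge ω₁ ω₂ t) ω₁ + Fm φ θ₁ (edge ω₁ ω₂ t) ω₂ = 1 := by
  have hd := edge_isDist hω h0 h1
  have hsum := (Fm_isDist hmap θ₁ hd).2
  rw [sum_pair hω (fun x hx1 hx2 => by
    rw [Fm_zero_iff hpos hmarg θ₁ hd]
    simp [edge, hx1, hx2])] at hsum
  exact hsum

lemma gg_mem (hmap : ∀ p, IsDist p → IsDist (φ p)) (hpos : PositiveJoint φ)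
    (hmarg : Marginality φ) (θ₁ : Θ) {ω₁ ω₂ : Ω} (hω : ω₁ ≠ ω₂) {t : ℝ}
    (h0 : 0 < t) (h1 : t < 1) :
    0 < gg φ θ₁ ω₁ ω₂ t ∧ gg φ θ₁ ω₁ ω₂ t < 1 := by
  have hd := edge_isDist hω h0.le h1.le
  constructor
  · exact Fm_pos hmap hpos hmarg θ₁ hd (by rw [edge_val₁]; exact h0)
  · have hp := Fm_edge_pair hmap hpos hmarg θ₁ hω h0.le h1.le
    have h2 : 0 < Fm φ θ₁ (edge ω₁ ω₂ t) ω₂ :=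
      Fm_pos hmap hpos hmarg θ₁ hd (by rw [edge_val₂ hω]; linarith)
    unfold gg
    linarith

lemma twoAtom (hpos : PositiveJoint φ) (hmap : ∀ p, IsDist p → IsDist (φ p))
    (hmarg : Marginality φ) (θ₁ : Θ) {p} (hp : IsDist p) {ω₁ ω₂ : Ω} (hω : ω₁ ≠ ω₂)
    {θa θb : Θ} {t : ℝ} (h1 : p (ω₁, θa) = t) (h2 : p (ω₂, θb) = 1 - t)
    (h0 : ∀ x : Ω × Θ, x ≠ (ω₁, θa) → x ≠ (ω₂, θb) → p x = 0) :
    φ p (ω₁, θa) = gg φ θ₁ ω₁ ω₂ t ∧ φ p (ω₂, θb) = 1 - gg φ θ₁ ω₁ ω₂ t := by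
  have ht0 : 0 ≤ t := h1 ▸ hp.1 (ω₁, θa)
  have ht1 : t ≤ 1 := by have := hp.1 (ω₂, θb); rw [h2] at this; linarith
  have hme : margin p = edge ω₁ ω₂ t := by
    funext w
    unfold margin edge
    by_cases hw1 : w = ω₁
    · subst hw1
      rw [if_pos rfl]
      rw [Finset.sum_eq_single θa (fun θ _ hθ => h0 (w, θ)
        (by simp [hθ]) (by simp [hω])) (fun h => absurd (Finset.mem_univ θa) h)]
      exact h1
    · rw [if_neg hw1]
      by_cases hw2 : w = ω₂
      · subst hw2
        rw [if_pos rfl]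
        rw [Finset.sum_eq_single θb (fun θ _ hθ => h0 (w, θ)
          (by simp [hw1]) (by simp [hθ])) (fun h => absurd (Finset.mem_univ θb) h)]
        exact h2
      · rw [if_neg hw2]
        exact Finset.sum_eq_zero fun θ _ => h0 (w, θ) (by simp [hw1]) (by simp [hw2])
  have hA := marg_eq hmarg θ₁ hp ω₁
  have hB := marg_eq hmarg θ₁ hp ω₂
  rw [hme] at hA hB
  rw [Finset.sum_eq_single θa (fun θ _ hθ => (zero_iff hpos hp (ω₁, θ)).mpr
    (h0 _ (by simp [hθ]) (by simp [hω]))) (fun h => absurd (Finset.mem_univ θa) h)] at hA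
  rw [Finset.sum_eq_single θb (fun θ _ hθ => (zero_iff hpos hp (ω₂, θ)).mpr
    (h0 _ (by simp [Ne.symm hω]) (by simp [hθ]))) (fun h => absurd (Finset.mem_univ θb) h)] at hB
  refine ⟨hA, ?_⟩
  have hpair := Fm_edge_pair hmap hpos hmarg θ₁ hω ht0 ht1
  unfold gg
  linarith [hB, hpair]


lemma pair_cond (hmap : ∀ p, IsDist p → IsDist (φ p)) (hpos : PositiveJoint φ)
    (hcoh : StrongSignalCoherent φ) (hmarg : Marginality φ) (θ₁ : Θ)
    {P : Ω × Θ → ℝ} (hP : IsDist P) {ω₁ ω₂ : Ω} (hω : ω₁ ≠ ω₂)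
    {θA θC : Θ} (hAC : θA ≠ θC) {w z : ℝ} (hw : 0 < w) (hz : 0 < z)
    (ha : P (ω₁, θA) = w) (hb : P (ω₂, θC) = z)
    (h0 : ∀ v : Ω × Θ, (v.2 = θA ∨ v.2 = θC) → v ≠ (ω₁, θA) → v ≠ (ω₂, θC) → P v = 0) :
    φ P (ω₁, θA) = φ P (ω₂, θC) * hh φ θ₁ ω₁ ω₂ (w / z) := by
  have colA : ∑ v, P (v, θA) = w := by
    rw [Finset.sum_eq_single ω₁ (fun v _ hv => h0 (v, θA) (Or.inl rfl)
      (by simp [hv]) (by simp [hAC])) (fun h => absurd (Finset.mem_univ ω₁) h), ha]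
  have colC : ∑ v, P (v, θC) = z := by
    rw [Finset.sum_eq_single ω₂ (fun v _ hv => h0 (v, θC) (Or.inr rfl)
      (by simp [Ne.symm hAC]) (by simp [hv])) (fun h => absurd (Finset.mem_univ ω₂) h), hb]
  have hmass : ∑ θ ∈ ({θA, θC} : Finset Θ), ∑ v, P (v, θ) = w + z := by
    rw [Finset.sum_insert (by simp [hAC]), Finset.sum_singleton, colA, colC]
  have hM : (0:ℝ) < w + z := by linarith
  have hmass' : 0 < ∑ θ ∈ ({θA, θC} : Finset Θ), ∑ v, P (v, θ) := by rw [hmass]; exact hM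
  set Q := condSignalEvent P {θA, θC} with hQdef
  have hQ : IsDist Q := cond_isDist hP hmass'
  have hQa : Q (ω₁, θA) = w / (w + z) := by
    rw [hQdef]
    unfold condSignalEvent
    rw [if_pos (by simp), hmass, ha]
  have hQc : Q (ω₂, θC) = 1 - w / (w + z) := by
    rw [hQdef]
    unfold condSignalEvent
    rw [if_pos (by simp), hmass, hb]
    field_simp
    ring
  have hQ0 : ∀ x : Ω × Θ, x ≠ (ω₁, θA) → x ≠ (ω₂, θC) → Q x = 0 := by
    intro x hx1 hx2
    rw [hQdef]
    unfold condSignalEvent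
    split
    · rename_i hmem
      simp only [Finset.mem_insert, Finset.mem_singleton] at hmem
      rw [h0 x hmem hx1 hx2, zero_div]
    · rfl
  have htA := twoAtom hpos hmap hmarg θ₁ hQ hω hQa hQc hQ0
  have hCpos : 0 < ∑ θ ∈ ({θA, θC} : Finset Θ), ∑ v, φ P (v, θ) := by
    rw [Finset.sum_insert (by simp [hAC]), Finset.sum_singleton]
    have h1 : 0 < ∑ v, φ P (v, θA) := colsum_pos hmap hpos hP (by rw [colA]; exact hw)
    have h2 : 0 ≤ ∑ v, φ P (v, θC) := Finset.sum_nonneg fun v _ => (hmap P hP).1 _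
    linarith
  have hea := condS_eval hcoh hP hmass' (ω₁, θA) (by simp)
  have hec := condS_eval hcoh hP hmass' (ω₂, θC) (by simp)
  rw [← hQdef] at hea hec
  rw [htA.1] at hea
  rw [htA.2] at hec
  -- hea : gg = φ P (ω₁,θA) / C ; hec : 1 - gg = φ P (ω₂,θC) / C
  have ht0 : 0 < w / (w + z) := by positivity
  have ht1 : w / (w + z) < 1 := by rw [div_lt_one hM]; linarith
  obtain ⟨hg0, hg1⟩ := gg_mem hmap hpos hmarg θ₁ hω ht0 ht1
  have harg : (w / z) / (1 + w / z) = w / (w + z) := by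
    rw [show (1:ℝ) + w / z = (w + z) / z by field_simp; ring]
    rw [div_div_div_cancel_right₀]
    exact hz.ne'
  unfold hh
  rw [harg]
  have hC := hCpos.ne'
  field_simp at hea hec
  -- hea : gg * C = φ P (ω₁,θA) ; hec : (1-gg) * C = φ P (ω₂,θC) (shapes may vary)
  have hgne : 1 - gg φ θ₁ ω₁ ω₂ (w / (w + z)) ≠ 0 := by linarith
  field_simp
  nlinarith [hea, hec]

lemma RI (hmap : ∀ p, IsDist p → IsDist (φ p)) (hpos : PositiveJoint φ)
    (hcoh : StrongSignalCoherent φ) (hmarg : Marginality φ) (θ₁ : Θ)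
    {θa θb θc : Θ} (hab : θa ≠ θb) (hac : θa ≠ θc) (hbc : θb ≠ θc)
    {q : Ω → ℝ} (hq : IsDist q) {ω ω' : Ω} (hne : ω ≠ ω') (h1 : 0 < q ω) (h2 : 0 < q ω') :
    Fm φ θ₁ q ω = Fm φ θ₁ q ω' * hh φ θ₁ ω ω' (q ω / q ω') := by
  have hba := Ne.symm hab
  have hca := Ne.symm hac
  have hcb := Ne.symm hbc
  have hen := Ne.symm hne
  set P : Ω × Θ → ℝ := fun v =>
    if v.2 = θa then (if v.1 = ω then q ω else 0)
    else if v.2 = θc then (if v.1 = ω' then q ω' else 0)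
    else if v.2 = θb then (if v.1 = ω ∨ v.1 = ω' then 0 else q v.1) else 0 with hPdef
  have hPval : ∀ v : Ω × Θ, P v =
      if v.2 = θa then (if v.1 = ω then q ω else 0)
      else if v.2 = θc then (if v.1 = ω' then q ω' else 0)
      else if v.2 = θb then (if v.1 = ω ∨ v.1 = ω' then 0 else q v.1) else 0 :=
    fun v => rfl
  have pa : ∀ u, P (u, θa) = if u = ω then q ω else 0 := fun u => by simp [hPval]
  have pc : ∀ u, P (u, θc) = if u = ω' then q ω' else 0 := fun u => by simp [hPval, hca]
  have pb : ∀ u, P (u, θb) = if u = ω ∨ u = ω' then 0 else q u := fun u => by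
    simp [hPval, hba, hbc]
  have hmarP : margin P = q := by
    funext u
    unfold margin
    rw [sum_triple hac hab hcb (fun θ he1 he2 he3 => by
      rw [hPval]; simp only; rw [if_neg he1, if_neg he2, if_neg he3]), pa, pc, pb]
    by_cases hu1 : u = ω
    · subst hu1; simp [hne]
    · by_cases hu2 : u = ω'
      · subst hu2; simp [hu1]
      · simp [hu1, hu2]
  have hP : IsDist P := by
    constructor
    · intro v
      rw [hPval]
      split_ifs <;> first | exact hq.1 _ | exact le_refl 0
    · rw [Fintype.sum_prod_type]
      calc ∑ u : Ω, ∑ y : Θ, P (u, y) = ∑ u : Ω, q u :=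
            Finset.sum_congr rfl fun u _ => congrFun hmarP u
        _ = 1 := hq.2
  have hzA : ∀ θ, θ ≠ θa → P (ω, θ) = 0 := by
    intro θ hθ
    rw [hPval]
    simp [hθ, hne]
  have hzC : ∀ θ, θ ≠ θc → P (ω', θ) = 0 := by
    intro θ hθ
    rw [hPval]
    simp [hθ, hen]
  have hFA : Fm φ θ₁ q ω = φ P (ω, θa) := by
    have hme := marg_eq hmarg θ₁ hP ω
    rw [hmarP] at hme
    rw [← hme]
    exact Finset.sum_eq_single θa (fun θ _ hθ => (zero_iff hpos hP (ω, θ)).mpr (hzA θ hθ))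
      (fun h => absurd (Finset.mem_univ θa) h)
  have hFC : Fm φ θ₁ q ω' = φ P (ω', θc) := by
    have hme := marg_eq hmarg θ₁ hP ω'
    rw [hmarP] at hme
    rw [← hme]
    exact Finset.sum_eq_single θc (fun θ _ hθ => (zero_iff hpos hP (ω', θ)).mpr (hzC θ hθ))
      (fun h => absurd (Finset.mem_univ θc) h)
  have ha : P (ω, θa) = q ω := by simp [hPval]
  have hb : P (ω', θc) = q ω' := by simp [hPval, hca]
  have h0 : ∀ v : Ω × Θ, (v.2 = θa ∨ v.2 = θc) → v ≠ (ω, θa) → v ≠ (ω', θc) → P v = 0 := by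
    rintro ⟨u, θ⟩ hor hv1 hv2
    rcases hor with hθ | hθ
    · subst hθ
      have hu : u ≠ ω := fun h => hv1 (by rw [h])
      simp [pa, hu]
    · subst hθ
      have hu : u ≠ ω' := fun h => hv2 (by rw [h])
      simp [pc, hu]
  rw [hFA, hFC]
  exact pair_cond hmap hpos hcoh hmarg θ₁ hP hne hac h1 h2 ha hb h0

lemma hh_add_raw (hmap : ∀ p, IsDist p → IsDist (φ p)) (hpos : PositiveJoint φ)
    (hcoh : StrongSignalCoherent φ) (hmarg : Marginality φ) (θ₁ : Θ) {θa θb θc : Θ}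
    (hab : θa ≠ θb) (hac : θa ≠ θc) (hbc : θb ≠ θc)
    {ω₁ ω₂ : Ω} (hω : ω₁ ≠ ω₂) {x y z : ℝ} (hx : 0 < x) (hy : 0 < y) (hz : 0 < z)
    (hsum : x + y + z = 1) :
    hh φ θ₁ ω₁ ω₂ ((x + y) / z) = hh φ θ₁ ω₁ ω₂ (x / z) + hh φ θ₁ ω₁ ω₂ (y / z) := by
  have hba := Ne.symm hab
  have hca := Ne.symm hac
  have hcb := Ne.symm hbc
  have hen := Ne.symm hω
  set P : Ω × Θ → ℝ := fun v =>
    if v.2 = θa then (if v.1 = ω₁ then x else 0)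
    else if v.2 = θb then (if v.1 = ω₁ then y else 0)
    else if v.2 = θc then (if v.1 = ω₂ then z else 0) else 0 with hPdef
  have pa : ∀ u, P (u, θa) = if u = ω₁ then x else 0 := fun u => by simp [hPdef]
  have pb : ∀ u, P (u, θb) = if u = ω₁ then y else 0 := fun u => by simp [hPdef, hba]
  have pc : ∀ u, P (u, θc) = if u = ω₂ then z else 0 := fun u => by simp [hPdef, hca, hcb]
  have hmarP : margin P = edge ω₁ ω₂ (x + y) := by
    funext u
    unfold margin
    rw [sum_triple hab hac hbc (fun θ he1 he2 he3 => by
      show P (u, θ) = 0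
      rw [hPdef]; simp only; rw [if_neg he1, if_neg he2, if_neg he3]), pa, pb, pc]
    unfold edge
    by_cases hu1 : u = ω₁
    · subst hu1; simp [hω]
    · by_cases hu2 : u = ω₂
      · subst hu2; simp [hu1]; linarith
      · simp [hu1, hu2]
  have hP : IsDist P := by
    constructor
    · intro v
      rw [hPdef]
      simp only
      split_ifs <;> first | linarith | exact le_refl 0
    · rw [Fintype.sum_prod_type]
      calc ∑ u : Ω, ∑ θ : Θ, P (u, θ) = ∑ u : Ω, edge ω₁ ω₂ (x + y) u :=
            Finset.sum_congr rfl fun u _ => congrFun hmarP u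
        _ = 1 := (edge_isDist hω (by linarith) (by linarith)).2
  have hzA : ∀ θ, θ ≠ θa → θ ≠ θb → P (ω₁, θ) = 0 := by
    intro θ h1 h2
    rw [hPdef]
    simp [h1, h2, hω]
  have hzC : ∀ θ, θ ≠ θc → P (ω₂, θ) = 0 := by
    intro θ h1
    rw [hPdef]
    simp [h1, hen]
  have hA : φ P (ω₁, θa) + φ P (ω₁, θb) = gg φ θ₁ ω₁ ω₂ (x + y) := by
    have hme := marg_eq hmarg θ₁ hP ω₁
    rw [hmarP] at hme
    rw [sum_pair hab (fun θ h1 h2 => (zero_iff hpos hP (ω₁, θ)).mpr (hzA θ h1 h2))] at hme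
    exact hme
  have hC : φ P (ω₂, θc) = 1 - gg φ θ₁ ω₁ ω₂ (x + y) := by
    have hme := marg_eq hmarg θ₁ hP ω₂
    rw [hmarP] at hme
    rw [Finset.sum_eq_single θc (fun θ _ hθ => (zero_iff hpos hP (ω₂, θ)).mpr (hzC θ hθ))
      (fun h => absurd (Finset.mem_univ θc) h)] at hme
    have hpair := Fm_edge_pair hmap hpos hmarg θ₁ hω (t := x + y) (by linarith) (by linarith)
    unfold gg
    linarith
  have hPa : P (ω₁, θa) = x := by rw [pa, if_pos rfl]
  have hPb : P (ω₁, θb) = y := by rw [pb, if_pos rfl]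
  have hPc : P (ω₂, θc) = z := by rw [pc, if_pos rfl]
  have e1 : φ P (ω₁, θa) = φ P (ω₂, θc) * hh φ θ₁ ω₁ ω₂ (x / z) := by
    refine pair_cond hmap hpos hcoh hmarg θ₁ hP hω hac hx hz hPa hPc ?_
    rintro ⟨u, θ⟩ hor hv1 hv2
    rcases hor with hθ | hθ
    · subst hθ
      have hu : u ≠ ω₁ := fun h => hv1 (by rw [h])
      simp [pa, hu]
    · subst hθ
      have hu : u ≠ ω₂ := fun h => hv2 (by rw [h])
      simp [pc, hu]
  have e2 : φ P (ω₁, θb) = φ P (ω₂, θc) * hh φ θ₁ ω₁ ω₂ (y / z) := by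
    refine pair_cond hmap hpos hcoh hmarg θ₁ hP hω hbc hy hz hPb hPc ?_
    rintro ⟨u, θ⟩ hor hv1 hv2
    rcases hor with hθ | hθ
    · subst hθ
      have hu : u ≠ ω₁ := fun h => hv1 (by rw [h])
      simp [pb, hu]
    · subst hθ
      have hu : u ≠ ω₂ := fun h => hv2 (by rw [h])
      simp [pc, hu]
  have hxy1 : x + y < 1 := by linarith
  obtain ⟨hg0, hg1⟩ := gg_mem hmap hpos hmarg θ₁ hω (by linarith : (0:ℝ) < x + y) hxy1
  have harg : ((x + y) / z) / (1 + (x + y) / z) = x + y := by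
    rw [show (1:ℝ) + (x + y) / z = ((x + y) + z) / z by field_simp; ring]
    rw [div_div_div_cancel_right₀]
    · rw [show x + y + z = 1 from hsum, div_one]
    · exact hz.ne'
  have hgoal : hh φ θ₁ ω₁ ω₂ ((x + y) / z)
      = gg φ θ₁ ω₁ ω₂ (x + y) / (1 - gg φ θ₁ ω₁ ω₂ (x + y)) := by
    unfold hh
    rw [harg]
  rw [hgoal]
  have hfin := hA
  rw [e1, e2, hC] at hfin
  have hne1 : 1 - gg φ θ₁ ω₁ ω₂ (x + y) ≠ 0 := by linarith
  rw [div_eq_iff hne1]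
  linear_combination -hfin

lemma hh_pos (hmap : ∀ p, IsDist p → IsDist (φ p)) (hpos : PositiveJoint φ)
    (hmarg : Marginality φ) (θ₁ : Θ) {ω₁ ω₂ : Ω} (hω : ω₁ ≠ ω₂) {r : ℝ} (hr : 0 < r) :
    0 < hh φ θ₁ ω₁ ω₂ r := by
  have h1 : (0:ℝ) < 1 + r := by linarith
  have hs0 : 0 < r / (1 + r) := by positivity
  have hs1 : r / (1 + r) < 1 := by rw [div_lt_one h1]; linarith
  obtain ⟨g0, g1⟩ := gg_mem hmap hpos hmarg θ₁ hω hs0 hs1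
  exact div_pos g0 (by linarith)

lemma hh_lin (hmap : ∀ p, IsDist p → IsDist (φ p)) (hpos : PositiveJoint φ)
    (hcoh : StrongSignalCoherent φ) (hmarg : Marginality φ) (θ₁ : Θ) {θa θb θc : Θ}
    (hab : θa ≠ θb) (hac : θa ≠ θc) (hbc : θb ≠ θc)
    {ω₁ ω₂ : Ω} (hω : ω₁ ≠ ω₂) {r : ℝ} (hr : 0 < r) :
    hh φ θ₁ ω₁ ω₂ r = kap φ θ₁ ω₁ ω₂ * r := by
  have hadd : ∀ u v : ℝ, 0 < u → 0 < v →
      hh φ θ₁ ω₁ ω₂ (u + v) = hh φ θ₁ ω₁ ω₂ u + hh φ θ₁ ω₁ ω₂ v := by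
    intro u v hu hv
    set w : ℝ := 1 / (1 + u + v) with hwdef
    have hw : 0 < w := by rw [hwdef]; positivity
    have h := hh_add_raw hmap hpos hcoh hmarg θ₁ hab hac hbc hω
      (x := u * w) (y := v * w) (z := w) (by positivity) (by positivity) hw
      (by rw [hwdef]; field_simp; ring)
    have e1 : u * w / w = u := mul_div_cancel_right₀ u hw.ne'
    have e2 : v * w / w = v := mul_div_cancel_right₀ v hw.ne'
    have e3 : (u * w + v * w) / w = u + v := by
      rw [show u * w + v * w = (u + v) * w by ring]
      exact mul_div_cancel_right₀ _ hw.ne'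
    rw [e1, e2, e3] at h
    exact h
  have h := additive_pos_linear hadd
    (fun u hu => hh_pos hmap hpos hmarg θ₁ hω hu) r hr
  exact h

lemma kap_pos (hmap : ∀ p, IsDist p → IsDist (φ p)) (hpos : PositiveJoint φ)
    (hmarg : Marginality φ) (θ₁ : Θ) {ω₁ ω₂ : Ω} (hω : ω₁ ≠ ω₂) :
    0 < kap φ θ₁ ω₁ ω₂ :=
  hh_pos hmap hpos hmarg θ₁ hω one_pos

lemma RI' (hmap : ∀ p, IsDist p → IsDist (φ p)) (hpos : PositiveJoint φ)
    (hcoh : StrongSignalCoherent φ) (hmarg : Marginality φ) (θ₁ : Θ)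
    {θa θb θc : Θ} (hab : θa ≠ θb) (hac : θa ≠ θc) (hbc : θb ≠ θc)
    {q : Ω → ℝ} (hq : IsDist q) {ω ω' : Ω} (hne : ω ≠ ω') (h1 : 0 < q ω) (h2 : 0 < q ω') :
    Fm φ θ₁ q ω = Fm φ θ₁ q ω' * (kap φ θ₁ ω ω' * (q ω / q ω')) := by
  rw [← hh_lin hmap hpos hcoh hmarg θ₁ hab hac hbc hne (by positivity)]
  exact RI hmap hpos hcoh hmarg θ₁ hab hac hbc hq hne h1 h2

lemma kap_chain (hmap : ∀ p, IsDist p → IsDist (φ p)) (hpos : PositiveJoint φ)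
    (hcoh : StrongSignalCoherent φ) (hmarg : Marginality φ) (θ₁ : Θ)
    {θa θb θc : Θ} (hab : θa ≠ θb) (hac : θa ≠ θc) (hbc : θb ≠ θc)
    {a b c : Ω} (hab' : a ≠ b) (hac' : a ≠ c) (hbc' : b ≠ c) :
    kap φ θ₁ a b * kap φ θ₁ b c = kap φ θ₁ a c := by
  set q : Ω → ℝ := fun w => if w = a ∨ w = b ∨ w = c then (3:ℝ)⁻¹ else 0 with hqdef
  have hq : IsDist q := by
    constructor
    · intro w
      rw [hqdef]
      simp only
      split
      · norm_num
      · exact le_refl 0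
    · rw [sum_triple hab' hac' hbc' (fun w h1 h2 h3 => by simp [hqdef, h1, h2, h3])]
      simp [hqdef]
      norm_num
  have hqa : q a = 3⁻¹ := by simp [hqdef]
  have hqb : q b = 3⁻¹ := by simp [hqdef]
  have hqc : q c = 3⁻¹ := by simp [hqdef]
  have hpos3 : (0:ℝ) < 3⁻¹ := by norm_num
  have r1 := RI hmap hpos hcoh hmarg θ₁ hab hac hbc hq hab'
    (by rw [hqa]; norm_num) (by rw [hqb]; norm_num)
  have r2 := RI hmap hpos hcoh hmarg θ₁ hab hac hbc hq hbc'
    (by rw [hqb]; norm_num) (by rw [hqc]; norm_num)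
  have r3 := RI hmap hpos hcoh hmarg θ₁ hab hac hbc hq hac'
    (by rw [hqa]; norm_num) (by rw [hqc]; norm_num)
  rw [hqa, hqb, div_self (by norm_num : (3:ℝ)⁻¹ ≠ 0)] at r1
  rw [hqb, hqc, div_self (by norm_num : (3:ℝ)⁻¹ ≠ 0)] at r2
  rw [hqa, hqc, div_self (by norm_num : (3:ℝ)⁻¹ ≠ 0)] at r3
  have hFc : 0 < Fm φ θ₁ q c := Fm_pos hmap hpos hmarg θ₁ hq (by rw [hqc]; norm_num)
  have h4 : Fm φ θ₁ q c * kap φ θ₁ a c = Fm φ θ₁ q c * (kap φ θ₁ a b * kap φ θ₁ b c) := by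
    have := r3.symm.trans (by rw [r1, r2] : Fm φ θ₁ q a = Fm φ θ₁ q c * hh φ θ₁ b c 1 * hh φ θ₁ a b 1)
    unfold kap
    rw [this]
    ring
  exact (mul_left_cancel₀ hFc.ne' h4).symm

lemma kap_inv (hmap : ∀ p, IsDist p → IsDist (φ p)) (hpos : PositiveJoint φ)
    (hcoh : StrongSignalCoherent φ) (hmarg : Marginality φ) (θ₁ : Θ)
    {θa θb θc : Θ} (hab : θa ≠ θb) (hac : θa ≠ θc) (hbc : θb ≠ θc)
    {a b : Ω} (hab' : a ≠ b) :
    kap φ θ₁ a b * kap φ θ₁ b a = 1 := by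
  set q : Ω → ℝ := fun w => if w = a ∨ w = b then (2:ℝ)⁻¹ else 0 with hqdef
  have hq : IsDist q := by
    constructor
    · intro w
      rw [hqdef]
      simp only
      split
      · norm_num
      · exact le_refl 0
    · rw [sum_pair hab' (fun w h1 h2 => by simp [hqdef, h1, h2])]
      simp [hqdef]
      norm_num
  have hqa : q a = 2⁻¹ := by simp [hqdef]
  have hqb : q b = 2⁻¹ := by simp [hqdef]
  have r1 := RI hmap hpos hcoh hmarg θ₁ hab hac hbc hq hab'
    (by rw [hqa]; norm_num) (by rw [hqb]; norm_num)
  have r2 := RI hmap hpos hcoh hmarg θ₁ hab hac hbc hq hab'.symm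
    (by rw [hqb]; norm_num) (by rw [hqa]; norm_num)
  rw [hqa, hqb, div_self (by norm_num : (2:ℝ)⁻¹ ≠ 0)] at r1 r2
  have hFa : 0 < Fm φ θ₁ q a := Fm_pos hmap hpos hmarg θ₁ hq (by rw [hqa]; norm_num)
  have h4 : Fm φ θ₁ q a * 1 = Fm φ θ₁ q a * (kap φ θ₁ a b * kap φ θ₁ b a) := by
    calc Fm φ θ₁ q a * 1 = Fm φ θ₁ q a := mul_one _
      _ = Fm φ θ₁ q b * hh φ θ₁ a b 1 := r1
      _ = (Fm φ θ₁ q a * hh φ θ₁ b a 1) * hh φ θ₁ a b 1 := by rw [← r2]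
      _ = Fm φ θ₁ q a * (kap φ θ₁ a b * kap φ θ₁ b a) := by unfold kap; ring
  exact (mul_left_cancel₀ hFa.ne' h4).symm

lemma Fm_formula (hmap : ∀ p, IsDist p → IsDist (φ p)) (hpos : PositiveJoint φ)
    (hcoh : StrongSignalCoherent φ) (hmarg : Marginality φ) (θ₁ : Θ) {θa θb θc : Θ}
    (hab : θa ≠ θb) (hac : θa ≠ θc) (hbc : θb ≠ θc)
    {ψ : Ω → ℝ} (hψ : ∀ ω, 0 < ψ ω)
    (hκ : ∀ a b : Ω, a ≠ b → kap φ θ₁ a b * ψ b = ψ a)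
    {q : Ω → ℝ} (hq : IsDist q) (ω : Ω) :
    Fm φ θ₁ q ω * (∑ w, ψ w * q w) = ψ ω * q ω := by
  by_cases hqω : q ω = 0
  · rw [(Fm_zero_iff hpos hmarg θ₁ hq ω).mpr hqω, hqω, zero_mul, mul_zero]
  have key : ∀ w : Ω, Fm φ θ₁ q ω * (ψ w * q w) = ψ ω * q ω * Fm φ θ₁ q w := by
    intro w
    by_cases hw : w = ω
    · subst hw; ring
    by_cases hqw : q w = 0
    · rw [(Fm_zero_iff hpos hmarg θ₁ hq w).mpr hqw, hqw]; ring
    have hqω' : 0 < q ω := (hq.1 ω).lt_of_ne (Ne.symm hqω)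
    have hqw' : 0 < q w := (hq.1 w).lt_of_ne (Ne.symm hqw)
    have hri := RI' hmap hpos hcoh hmarg θ₁ hab hac hbc hq (Ne.symm hw) hqω' hqw'
    have h5 := hκ ω w (Ne.symm hw)
    calc Fm φ θ₁ q ω * (ψ w * q w)
        = Fm φ θ₁ q w * (kap φ θ₁ ω w * (q ω / q w)) * (ψ w * q w) := by rw [← hri]
      _ = Fm φ θ₁ q w * (kap φ θ₁ ω w * ψ w) * (q ω / q w * q w) := by ring
      _ = Fm φ θ₁ q w * ψ ω * (q ω / q w * q w) := by rw [h5]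
      _ = Fm φ θ₁ q w * ψ ω * q ω := by rw [div_mul_cancel₀ _ hqw'.ne']
      _ = ψ ω * q ω * Fm φ θ₁ q w := by ring
  calc Fm φ θ₁ q ω * (∑ w, ψ w * q w)
      = ∑ w, Fm φ θ₁ q ω * (ψ w * q w) := Finset.mul_sum _ _ _
    _ = ∑ w, ψ ω * q ω * Fm φ θ₁ q w := Finset.sum_congr rfl fun w _ => key w
    _ = ψ ω * q ω * ∑ w, Fm φ θ₁ q w := (Finset.mul_sum _ _ _).symm
    _ = ψ ω * q ω := by rw [(Fm_isDist hmap θ₁ hq).2, mul_one]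

lemma col_formula (hmap : ∀ p, IsDist p → IsDist (φ p)) (hpos : PositiveJoint φ)
    (hcoh : StrongSignalCoherent φ) (hmarg : Marginality φ) (θ₁ : Θ) {θa θb θc : Θ}
    (hab : θa ≠ θb) (hac : θa ≠ θc) (hbc : θb ≠ θc)
    {ψ : Ω → ℝ} (hψ : ∀ ω, 0 < ψ ω)
    (hκ : ∀ a b : Ω, a ≠ b → kap φ θ₁ a b * ψ b = ψ a)
    {p : Ω × Θ → ℝ} (hp : IsDist p) {θh : Θ} (hm : 0 < ∑ w, p (w, θh)) (u : Ω) :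
    φ p (u, θh) * (∑ w, ψ w * p (w, θh))
      = (∑ w, φ p (w, θh)) * (ψ u * p (u, θh)) := by
  have hW : 0 < ∑ w, ψ w * p (w, θh) := wsum_pos hψ (fun w => hp.1 _) hm
  have hcol : IsDist (fun w => p (w, θh) / ∑ w', p (w', θh)) :=
    ⟨fun w => div_nonneg (hp.1 _) hm.le, by rw [← Finset.sum_div, div_self hm.ne']⟩
  have h2 := cond_col hmap hpos hcoh hmarg θ₁ hp hm u
  have h3 := Fm_formula hmap hpos hcoh hmarg θ₁ hab hac hbc hψ hκ hcol u
  have h4 : (∑ w, ψ w * (p (w, θh) / ∑ w', p (w', θh)))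
      = (∑ w, ψ w * p (w, θh)) / ∑ w', p (w', θh) := by
    rw [Finset.sum_div]
    exact Finset.sum_congr rfl fun w _ => (mul_div_assoc _ _ _).symm
  rw [h4] at h3
  have h5 : Fm φ θ₁ (fun w => p (w, θh) / ∑ w', p (w', θh)) u * (∑ w, ψ w * p (w, θh))
      = ψ u * p (u, θh) := by
    have hmne : (∑ w', p (w', θh)) ≠ 0 := hm.ne'
    field_simp at h3
    linarith [h3]
  rw [h2, mul_assoc, h5]

lemma twoCol_nondeg (hmap : ∀ p, IsDist p → IsDist (φ p)) (hpos : PositiveJoint φ)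
    (hcoh : StrongSignalCoherent φ) (hmarg : Marginality φ) (θ₁ : Θ) {θa θb θc : Θ}
    (hab : θa ≠ θb) (hac : θa ≠ θc) (hbc : θb ≠ θc)
    {ψ : Ω → ℝ} (hψ : ∀ ω, 0 < ψ ω)
    (hκ : ∀ a b : Ω, a ≠ b → kap φ θ₁ a b * ψ b = ψ a)
    {P : Ω × Θ → ℝ} (hP : IsDist P) {θA θB : Θ} (hAB : θA ≠ θB)
    (h0 : ∀ v : Ω × Θ, v.2 ≠ θA → v.2 ≠ θB → P v = 0)
    (hma : 0 < ∑ w, P (w, θA)) (hmb : 0 < ∑ w, P (w, θB))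
    (hnd : ∃ u : Ω, P (u, θA) * (∑ w, ψ w * P (w, θB))
      ≠ P (u, θB) * (∑ w, ψ w * P (w, θA))) :
    (∑ w, φ P (w, θA)) * ((∑ w, ψ w * P (w, θA)) + (∑ w, ψ w * P (w, θB)))
      = ∑ w, ψ w * P (w, θA) := by
  obtain ⟨u, hu⟩ := hnd
  set WA := ∑ w, ψ w * P (w, θA) with hWAdef
  set WB := ∑ w, ψ w * P (w, θB) with hWBdef
  set ca := ∑ w, φ P (w, θA) with hcadef
  set cb := ∑ w, φ P (w, θB) with hcbdef
  have hcab : ca + cb = 1 := by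
    have h1 := (hmap P hP).2
    rw [Fintype.sum_prod_type_right] at h1
    rw [sum_pair hAB (fun θ h1' h2' => Finset.sum_eq_zero fun w _ =>
      (zero_iff hpos hP (w, θ)).mpr (h0 _ h1' h2'))] at h1
    exact h1
  have colFA := col_formula hmap hpos hcoh hmarg θ₁ hab hac hbc hψ hκ hP hma u
  have colFB := col_formula hmap hpos hcoh hmarg θ₁ hab hac hbc hψ hκ hP hmb u
  have hmard : IsDist (margin P) := margin_isDist hP
  have h8 : ∑ w, ψ w * margin P w = WA + WB := by
    calc ∑ w, ψ w * margin P w = ∑ w, ∑ θ, ψ w * P (w, θ) :=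
          Finset.sum_congr rfl fun w _ => Finset.mul_sum _ _ _
      _ = ∑ θ, ∑ w, ψ w * P (w, θ) := Finset.sum_comm
      _ = WA + WB := sum_pair hAB (fun θ h1 h2 => Finset.sum_eq_zero fun w _ => by
          rw [h0 (w, θ) h1 h2, mul_zero])
  have h6u : φ P (u, θA) + φ P (u, θB) = Fm φ θ₁ (margin P) u := by
    have hme := marg_eq hmarg θ₁ hP u
    rw [sum_pair hAB (fun θ h1 h2 => (zero_iff hpos hP (u, θ)).mpr (h0 _ h1 h2))] at hme
    exact hme
  have h7u := Fm_formula hmap hpos hcoh hmarg θ₁ hab hac hbc hψ hκ hmard u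
  rw [h8] at h7u
  have h9u : margin P u = P (u, θA) + P (u, θB) :=
    sum_pair hAB (fun θ h1 h2 => h0 (u, θ) h1 h2)
  have Eu : (φ P (u, θA) + φ P (u, θB)) * (WA + WB)
      = ψ u * (P (u, θA) + P (u, θB)) := by
    rw [h6u, ← h9u]
    exact h7u
  have E2 : ψ u * (ca * (P (u, θA) * (WB * (WA + WB)))
        + cb * (P (u, θB) * (WA * (WA + WB))))
      = ψ u * ((P (u, θA) + P (u, θB)) * (WA * WB)) := by
    linear_combination (-(WB * (WA + WB))) * colFA + (-(WA * (WA + WB))) * colFB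
      + (WA * WB) * Eu
  have E3 := mul_left_cancel₀ (hψ u).ne' E2
  have key : (ca * (WA + WB) - WA) * (P (u, θA) * WB - P (u, θB) * WA) = 0 := by
    linear_combination E3 - (P (u, θB) * WA * (WA + WB)) * hcab
  rcases mul_eq_zero.mp key with h | h
  · linarith
  · exact absurd (by linarith : P (u, θA) * WB = P (u, θB) * WA) hu

lemma twoCol (hmap : ∀ p, IsDist p → IsDist (φ p)) (hpos : PositiveJoint φ)
    (hcoh : StrongSignalCoherent φ) (hmarg : Marginality φ)
    (hcont : ContinuousOn φ {p | IsDist p}) (hΩ3 : 3 ≤ Fintype.card Ω)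
    (θ₁ : Θ) {θa θb θc : Θ}
    (hab : θa ≠ θb) (hac : θa ≠ θc) (hbc : θb ≠ θc)
    {ψ : Ω → ℝ} (hψ : ∀ ω, 0 < ψ ω)
    (hκ : ∀ a b : Ω, a ≠ b → kap φ θ₁ a b * ψ b = ψ a)
    {P : Ω × Θ → ℝ} (hP : IsDist P) {θA θB : Θ} (hAB : θA ≠ θB)
    (h0 : ∀ v : Ω × Θ, v.2 ≠ θA → v.2 ≠ θB → P v = 0)
    (hma : 0 < ∑ w, P (w, θA)) (hmb : 0 < ∑ w, P (w, θB)) :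
    (∑ w, φ P (w, θA)) * ((∑ w, ψ w * P (w, θA)) + (∑ w, ψ w * P (w, θB)))
      = ∑ w, ψ w * P (w, θA) := by
  by_cases hnd : ∃ u : Ω, P (u, θA) * (∑ w, ψ w * P (w, θB))
      ≠ P (u, θB) * (∑ w, ψ w * P (w, θA))
  · exact twoCol_nondeg hmap hpos hcoh hmarg θ₁ hab hac hbc hψ hκ hP hAB h0 hma hmb hnd
  push_neg at hnd
  have hWA : 0 < ∑ w, ψ w * P (w, θA) := wsum_pos hψ (fun w => hP.1 _) hma
  have hWB : 0 < ∑ w, ψ w * P (w, θB) := wsum_pos hψ (fun w => hP.1 _) hmb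
  set WA := ∑ w, ψ w * P (w, θA) with hWAdef
  set WB := ∑ w, ψ w * P (w, θB) with hWBdef
  set ma := ∑ w, P (w, θA) with hmadef
  obtain ⟨u', hu'⟩ := sum_pos_exists (fun w => hP.1 _) hmb
  haveI : Nontrivial Ω := Fintype.one_lt_card_iff_nontrivial.mp (by omega)
  obtain ⟨ws, hws⟩ := exists_ne u'
  have hBA := Ne.symm hAB
  set Pf : ℝ → Ω × Θ → ℝ := fun ε v =>
    if v.2 = θA then (1 - ε) * P v + ε * ma * (if v.1 = ws then 1 else 0) else P v
    with hPf
  have vA : ∀ (ε : ℝ) (w : Ω), Pf ε (w, θA)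
      = (1 - ε) * P (w, θA) + ε * ma * (if w = ws then 1 else 0) := by
    intro ε w; simp [hPf]
  have vO : ∀ (ε : ℝ) (v : Ω × Θ), v.2 ≠ θA → Pf ε v = P v := by
    intro ε v h; simp [hPf, h]
  have sumA : ∀ ε : ℝ, ∑ w, Pf ε (w, θA) = ma := by
    intro ε
    calc ∑ w, Pf ε (w, θA)
        = ∑ w, ((1 - ε) * P (w, θA) + ε * ma * (if w = ws then 1 else 0)) :=
          Finset.sum_congr rfl fun w _ => vA ε w
      _ = (1 - ε) * ma + ε * ma := by
          rw [Finset.sum_add_distrib, ← Finset.mul_sum, ← hmadef]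
          congr 1
          simp [mul_ite]
      _ = ma := by ring
  have colO : ∀ (ε : ℝ) (θ : Θ), θ ≠ θA → ∑ w, Pf ε (w, θ) = ∑ w, P (w, θ) := by
    intro ε θ h
    exact Finset.sum_congr rfl fun w _ => vO ε (w, θ) h
  have wsumA : ∀ ε : ℝ, ∑ w, ψ w * Pf ε (w, θA) = (1 - ε) * WA + ε * ma * ψ ws := by
    intro ε
    have hterm : ∀ w : Ω, ψ w * Pf ε (w, θA)
        = (1 - ε) * (ψ w * P (w, θA)) + (if w = ws then ε * ma * ψ ws else 0) := by
      intro w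
      rw [vA]
      by_cases hw : w = ws
      · subst hw; simp; ring
      · simp [hw]; ring
    calc ∑ w, ψ w * Pf ε (w, θA)
        = ∑ w, ((1 - ε) * (ψ w * P (w, θA)) + (if w = ws then ε * ma * ψ ws else 0)) :=
          Finset.sum_congr rfl fun w _ => hterm w
      _ = (1 - ε) * WA + ε * ma * ψ ws := by
          rw [Finset.sum_add_distrib, ← Finset.mul_sum, ← hWAdef, Finset.sum_ite_eq']
          simp
  have wsumB : ∀ ε : ℝ, ∑ w, ψ w * Pf ε (w, θB) = WB := by
    intro ε
    rw [hWBdef]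
    exact Finset.sum_congr rfl fun w _ => by rw [vO ε (w, θB) hBA]
  have hisdist : ∀ ε : ℝ, 0 < ε → ε < 1 → IsDist (Pf ε) := by
    intro ε h1 h2
    constructor
    · intro v
      rw [hPf]
      simp only
      split
      · have := hP.1 v
        have : (0:ℝ) ≤ ε * ma * (if v.1 = ws then 1 else 0) := by positivity
        nlinarith [hP.1 v]
      · exact hP.1 v
    · rw [Fintype.sum_prod_type_right]
      have hcols : ∑ θ, ∑ w, Pf ε (w, θ) = ∑ θ, ∑ w, P (w, θ) := by
        refine Finset.sum_congr rfl fun θ _ => ?_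
        by_cases hθ : θ = θA
        · subst hθ; rw [sumA, hmadef]
        · exact colO ε θ hθ
      rw [hcols, ← Fintype.sum_prod_type_right, hP.2]
  -- nondegeneracy of the perturbed distribution
  have hndε : ∀ ε : ℝ, 0 < ε → ε < 1 → ∃ u : Ω, Pf ε (u, θA) * (∑ w, ψ w * Pf ε (w, θB))
      ≠ Pf ε (u, θB) * (∑ w, ψ w * Pf ε (w, θA)) := by
    intro ε h1 h2
    by_contra hC
    push_neg at hC
    have e1 := hC u'
    have e2 := hC ws
    rw [wsumA, wsumB, vA, vO ε (u', θB) hBA, if_neg (Ne.symm hws)] at e1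
    rw [wsumA, wsumB, vA, vO ε (ws, θB) hBA, if_pos rfl] at e2
    have hWAε : (1 - ε) * WA + ε * ma * ψ ws = (1 - ε) * WA + ε * ma * ψ ws := rfl
    have h3 : P (u', θB) * ((1 - ε) * WA + ε * ma * ψ ws)
        = P (u', θB) * ((1 - ε) * WA) := by
      linear_combination (1 - ε) * hnd u' - e1
    have h4 := mul_left_cancel₀ hu'.ne' h3
    have h5 : ε * ma * WB = 0 := by
      linear_combination e2 - (1 - ε) * hnd ws + P (ws, θB) * h4
    have : 0 < ε * ma * WB := by positivity
    linarith
  -- apply the nondegenerate lemma along the path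
  have hres : ∀ ε : ℝ, 0 < ε → ε < 1 →
      (∑ w, φ (Pf ε) (w, θA)) * (((1 - ε) * WA + ε * ma * ψ ws) + WB)
        = (1 - ε) * WA + ε * ma * ψ ws := by
    intro ε h1 h2
    have hd := hisdist ε h1 h2
    have h0ε : ∀ v : Ω × Θ, v.2 ≠ θA → v.2 ≠ θB → Pf ε v = 0 := by
      intro v hv1 hv2
      rw [vO ε v hv1]
      exact h0 v hv1 hv2
    have hmaε : 0 < ∑ w, Pf ε (w, θA) := by rw [sumA]; exact hma
    have hmbε : 0 < ∑ w, Pf ε (w, θB) := by rw [colO ε θB hBA]; exact hmb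
    have := twoCol_nondeg hmap hpos hcoh hmarg θ₁ hab hac hbc hψ hκ hd hAB h0ε hmaε hmbε
      (hndε ε h1 h2)
    rw [wsumA, wsumB] at this
    exact this
  -- limits
  have hev : ∀ᶠ ε in nhdsWithin (0:ℝ) (Set.Ioi 0), ε ∈ Set.Ioo (0:ℝ) 1 :=
    Ioo_mem_nhdsGT_of_mem ⟨le_refl 0, zero_lt_one⟩
  have T1 : Filter.Tendsto Pf (nhdsWithin (0:ℝ) (Set.Ioi 0)) (nhds P) := by
    rw [tendsto_pi_nhds]
    intro v
    by_cases hv : v.2 = θA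
    · have hfun : (fun ε : ℝ => Pf ε v)
          = fun ε : ℝ => (1 - ε) * P v + ε * (ma * (if v.1 = ws then 1 else 0)) := by
        funext ε
        simp only [hPf, hv, if_pos]
        ring
      rw [hfun]
      have h' : Filter.Tendsto (fun ε : ℝ =>
          (1 - ε) * P v + ε * (ma * (if v.1 = ws then 1 else 0))) (nhds 0)
          (nhds ((1 - 0) * P v + 0 * (ma * (if v.1 = ws then 1 else 0)))) :=
        ((tendsto_const_nhds.sub Filter.tendsto_id).mul tendsto_const_nhds).add
          (Filter.tendsto_id.mul tendsto_const_nhds)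
      have h'' : Filter.Tendsto (fun ε : ℝ =>
          (1 - ε) * P v + ε * (ma * (if v.1 = ws then 1 else 0))) (nhds 0) (nhds (P v)) := by
        simpa using h'
      exact h''.mono_left nhdsWithin_le_nhds
    · have hfun : (fun ε : ℝ => Pf ε v) = fun _ : ℝ => P v := by
        funext ε; exact vO ε v hv
      rw [hfun]
      exact tendsto_const_nhds
  have T2 : Filter.Tendsto Pf (nhdsWithin (0:ℝ) (Set.Ioi 0))
      (nhdsWithin P {p | IsDist p}) := by
    rw [tendsto_nhdsWithin_iff]
    exact ⟨T1, hev.mono fun ε hε => hisdist ε hε.1 hε.2⟩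
  have T3 : Filter.Tendsto (fun ε => φ (Pf ε)) (nhdsWithin (0:ℝ) (Set.Ioi 0))
      (nhds (φ P)) := Filter.Tendsto.comp (hcont P hP) T2
  have T4 : Filter.Tendsto (fun ε => ∑ w, φ (Pf ε) (w, θA)) (nhdsWithin (0:ℝ) (Set.Ioi 0))
      (nhds (∑ w, φ P (w, θA))) := by
    refine tendsto_finset_sum _ fun w _ => ?_
    exact ((continuous_apply (w, θA)).tendsto (φ P)).comp T3
  have hDne : WA + WB ≠ 0 := by positivity
  have T5 : Filter.Tendsto
      (fun ε : ℝ => ((1 - ε) * WA + ε * ma * ψ ws) / (((1 - ε) * WA + ε * ma * ψ ws) + WB))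
      (nhdsWithin (0:ℝ) (Set.Ioi 0)) (nhds (WA / (WA + WB))) := by
    have h1 : Filter.Tendsto (fun ε : ℝ => (1 - ε) * WA + ε * ma * ψ ws) (nhds 0)
        (nhds WA) := by
      have h' : Filter.Tendsto (fun ε : ℝ => (1 - ε) * WA + ε * ma * ψ ws) (nhds 0)
          (nhds ((1 - 0) * WA + 0 * ma * ψ ws)) :=
        ((tendsto_const_nhds.sub Filter.tendsto_id).mul tendsto_const_nhds).add
          ((Filter.tendsto_id.mul tendsto_const_nhds).mul tendsto_const_nhds)
      simpa using h'
    have h2 : Filter.Tendsto (fun ε : ℝ => ((1 - ε) * WA + ε * ma * ψ ws) + WB) (nhds 0)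
        (nhds (WA + WB)) := h1.add tendsto_const_nhds
    exact (h1.div h2 hDne).mono_left nhdsWithin_le_nhds
  have heq : (fun ε : ℝ => ∑ w, φ (Pf ε) (w, θA)) =ᶠ[nhdsWithin (0:ℝ) (Set.Ioi 0)]
      (fun ε : ℝ => ((1 - ε) * WA + ε * ma * ψ ws)
        / (((1 - ε) * WA + ε * ma * ψ ws) + WB)) := by
    refine hev.mono fun ε hε => ?_
    have hWAε : 0 < (1 - ε) * WA + ε * ma * ψ ws := by
      have h1 : 0 < (1 - ε) * WA := mul_pos (by linarith [hε.2]) hWA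
      have h2 : 0 < ε * ma * ψ ws := by
        have := hψ ws
        have := hε.1
        positivity
      linarith
    have hDεne : ((1 - ε) * WA + ε * ma * ψ ws) + WB ≠ 0 := by positivity
    exact (eq_div_iff hDεne).mpr (hres ε hε.1 hε.2)
  have T6 := T5.congr' heq.symm
  have hlim := tendsto_nhds_unique T4 T6
  rw [hlim]
  field_simp

lemma pairs (hmap : ∀ p, IsDist p → IsDist (φ p)) (hpos : PositiveJoint φ)
    (hcoh : StrongSignalCoherent φ) (hmarg : Marginality φ)
    (hcont : ContinuousOn φ {p | IsDist p}) (hΩ3 : 3 ≤ Fintype.card Ω)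
    (θ₁ : Θ) {θa θb θc : Θ}
    (hab : θa ≠ θb) (hac : θa ≠ θc) (hbc : θb ≠ θc)
    {ψ : Ω → ℝ} (hψ : ∀ ω, 0 < ψ ω)
    (hκ : ∀ a b : Ω, a ≠ b → kap φ θ₁ a b * ψ b = ψ a)
    {p : Ω × Θ → ℝ} (hp : IsDist p) {θA θB : Θ} (hAB : θA ≠ θB)
    (hma : 0 < ∑ w, p (w, θA)) (hmb : 0 < ∑ w, p (w, θB)) :
    (∑ w, φ p (w, θA)) * (∑ w, ψ w * p (w, θB))
      = (∑ w, φ p (w, θB)) * (∑ w, ψ w * p (w, θA)) := by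
  have hmass : ∑ θ ∈ ({θA, θB} : Finset Θ), ∑ w, p (w, θ)
      = (∑ w, p (w, θA)) + (∑ w, p (w, θB)) := by
    rw [Finset.sum_insert (by simp [hAB]), Finset.sum_singleton]
  have hM : 0 < ∑ θ ∈ ({θA, θB} : Finset Θ), ∑ w, p (w, θ) := by rw [hmass]; linarith
  set Q := condSignalEvent p {θA, θB} with hQdef
  have hQ : IsDist Q := cond_isDist hp hM
  set M := ∑ θ ∈ ({θA, θB} : Finset Θ), ∑ w, p (w, θ) with hMdef
  have hQval : ∀ (w : Ω) (θ : Θ), θ ∈ ({θA, θB} : Finset Θ) → Q (w, θ) = p (w, θ) / M := by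
    intro w θ hθ
    rw [hQdef]
    unfold condSignalEvent
    rw [if_pos hθ]
  have hQ0 : ∀ v : Ω × Θ, v.2 ≠ θA → v.2 ≠ θB → Q v = 0 := by
    intro v h1 h2
    rw [hQdef]
    unfold condSignalEvent
    rw [if_neg (by simp [h1, h2])]
  have hQcol : ∀ θ : Θ, θ ∈ ({θA, θB} : Finset Θ) →
      ∑ w, Q (w, θ) = (∑ w, p (w, θ)) / M := by
    intro θ hθ
    rw [Finset.sum_congr rfl fun w _ => hQval w θ hθ, ← Finset.sum_div]
  have hQwcol : ∀ θ : Θ, θ ∈ ({θA, θB} : Finset Θ) →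
      ∑ w, ψ w * Q (w, θ) = (∑ w, ψ w * p (w, θ)) / M := by
    intro θ hθ
    rw [Finset.sum_div]
    refine Finset.sum_congr rfl fun w _ => ?_
    rw [hQval w θ hθ, mul_div_assoc]
  have hQma : 0 < ∑ w, Q (w, θA) := by
    rw [hQcol θA (by simp)]
    positivity
  have hQmb : 0 < ∑ w, Q (w, θB) := by
    rw [hQcol θB (by simp)]
    positivity
  have t1 := twoCol hmap hpos hcoh hmarg hcont hΩ3 θ₁ hab hac hbc hψ hκ hQ hAB hQ0 hQma hQmb
  have t2 := twoCol hmap hpos hcoh hmarg hcont hΩ3 θ₁ hab hac hbc hψ hκ hQ (Ne.symm hAB)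
    (fun v h1 h2 => hQ0 v h2 h1) hQmb hQma
  have cross : (∑ w, φ Q (w, θA)) * (∑ w, ψ w * Q (w, θB))
      = (∑ w, φ Q (w, θB)) * (∑ w, ψ w * Q (w, θA)) := by
    calc (∑ w, φ Q (w, θA)) * (∑ w, ψ w * Q (w, θB))
        = (∑ w, φ Q (w, θA)) * ((∑ w, φ Q (w, θB))
            * ((∑ w, ψ w * Q (w, θB)) + (∑ w, ψ w * Q (w, θA)))) := by rw [t2]
      _ = (∑ w, φ Q (w, θB)) * ((∑ w, φ Q (w, θA))
            * ((∑ w, ψ w * Q (w, θA)) + (∑ w, ψ w * Q (w, θB)))) := by ring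
      _ = (∑ w, φ Q (w, θB)) * (∑ w, ψ w * Q (w, θA)) := by rw [t1]
  set C := ∑ θ ∈ ({θA, θB} : Finset Θ), ∑ w, φ p (w, θ) with hCdef
  have hev : ∀ (w : Ω) (θ : Θ), θ ∈ ({θA, θB} : Finset Θ) → φ Q (w, θ) = φ p (w, θ) / C := by
    intro w θ hθ
    rw [hQdef]
    exact condS_eval hcoh hp hM (w, θ) hθ
  have hCpos : 0 < C := by
    rw [hCdef, Finset.sum_insert (by simp [hAB]), Finset.sum_singleton]
    have h1 := colsum_pos hmap hpos hp hma
    have h2 : 0 ≤ ∑ w, φ p (w, θB) := Finset.sum_nonneg fun w _ => (hmap p hp).1 _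
    linarith
  have hcA : ∑ w, φ Q (w, θA) = (∑ w, φ p (w, θA)) / C := by
    rw [Finset.sum_congr rfl fun w _ => hev w θA (by simp), ← Finset.sum_div]
  have hcB : ∑ w, φ Q (w, θB) = (∑ w, φ p (w, θB)) / C := by
    rw [Finset.sum_congr rfl fun w _ => hev w θB (by simp), ← Finset.sum_div]
  rw [hcA, hcB, hQwcol θA (by simp), hQwcol θB (by simp)] at cross
  have hMne : M ≠ 0 := hM.ne'
  have hCne : C ≠ 0 := hCpos.ne'
  field_simp at cross
  linarith [cross]

lemma main_formula (hΩ3 : 3 ≤ Fintype.card Ω) (hΘ3 : 3 ≤ Fintype.card Θ)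
    (hmap : ∀ p, IsDist p → IsDist (φ p)) (hpos : PositiveJoint φ)
    (hcont : ContinuousOn φ {p | IsDist p}) (hcoh : StrongSignalCoherent φ)
    (hmarg : Marginality φ) :
    ∃ ψ : Ω → ℝ, (∀ ω, 0 < ψ ω) ∧
      ∀ p, IsDist p → ∀ (ω : Ω) (θ : Θ),
        φ p (ω, θ) = ψ ω * p (ω, θ) / ∑ x : Ω × Θ, ψ x.1 * p x := by
  obtain ⟨θa, θb, θc, hab, hac, hbc⟩ := exists_triple hΘ3
  obtain ⟨ω₀⟩ : Nonempty Ω := Fintype.card_pos_iff.mp (by omega)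
  set ψ : Ω → ℝ := fun ω => if ω = ω₀ then 1 else kap φ θa ω ω₀ with hψdef
  have hψ : ∀ ω, 0 < ψ ω := by
    intro ω
    rw [hψdef]
    simp only
    split
    · exact one_pos
    · rename_i h
      exact kap_pos hmap hpos hmarg θa h
  have hκ : ∀ a b : Ω, a ≠ b → kap φ θa a b * ψ b = ψ a := by
    intro a b hne
    rw [hψdef]
    simp only
    by_cases hb : b = ω₀
    · subst hb
      rw [if_pos rfl, if_neg hne, mul_one]
    · rw [if_neg hb]
      by_cases ha : a = ω₀
      · subst ha
        rw [if_pos rfl]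
        have h1 := kap_inv hmap hpos hcoh hmarg θa hab hac hbc (Ne.symm hb)
        linarith [h1]
      · rw [if_neg ha]
        exact kap_chain hmap hpos hcoh hmarg θa hab hac hbc hne ha hb
  refine ⟨ψ, hψ, ?_⟩
  intro p hp ω θ
  have hDpos : 0 < ∑ x : Ω × Θ, ψ x.1 * p x :=
    wsum_pos (fun x => hψ x.1) hp.1 (by rw [hp.2]; norm_num)
  have hD : ∑ x : Ω × Θ, ψ x.1 * p x = ∑ θ' : Θ, ∑ w, ψ w * p (w, θ') := by
    rw [Fintype.sum_prod_type_right]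
  have hsumc : ∑ θ' : Θ, ∑ w, φ p (w, θ') = 1 := by
    rw [← Fintype.sum_prod_type_right]
    exact (hmap p hp).2
  have hzero : ∀ θ' : Θ, (∑ w, p (w, θ')) = 0 →
      (∑ w, ψ w * p (w, θ')) = 0 ∧ (∑ w, φ p (w, θ')) = 0 ∧ ∀ w, p (w, θ') = 0 := by
    intro θ' h0
    have hall : ∀ w, p (w, θ') = 0 := by
      intro w
      have := (Finset.sum_eq_zero_iff_of_nonneg (fun w _ => hp.1 (w, θ'))).mp h0
      exact this w (Finset.mem_univ w)
    exact ⟨Finset.sum_eq_zero fun w _ => by rw [hall w, mul_zero],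
      Finset.sum_eq_zero fun w _ => (zero_iff hpos hp (w, θ')).mpr (hall w),
      hall⟩
  have key : ∀ θ' : Θ, (∑ w, φ p (w, θ')) * (∑ x : Ω × Θ, ψ x.1 * p x)
      = ∑ w, ψ w * p (w, θ') := by
    intro θ'
    rcases ((Finset.sum_nonneg fun w _ => hp.1 (w, θ')) : (0:ℝ) ≤ ∑ w, p (w, θ')).eq_or_lt
      with hm0 | hmpos
    · obtain ⟨hW0, hc0, _⟩ := hzero θ' hm0.symm
      rw [hW0, hc0, zero_mul]
    · have hpair : ∀ θ'' : Θ, (∑ w, φ p (w, θ')) * (∑ w, ψ w * p (w, θ''))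
          = (∑ w, φ p (w, θ'')) * (∑ w, ψ w * p (w, θ')) := by
        intro θ''
        rcases ((Finset.sum_nonneg fun w _ => hp.1 (w, θ'')) : (0:ℝ) ≤ ∑ w, p (w, θ'')).eq_or_lt
          with hm0' | hmpos'
        · obtain ⟨hW0', hc0', _⟩ := hzero θ'' hm0'.symm
          rw [hW0', hc0', mul_zero, zero_mul]
        · by_cases hee : θ'' = θ'
          · subst hee; ring
          · exact pairs hmap hpos hcoh hmarg hcont hΩ3 θa hab hac hbc hψ hκ hp
              (Ne.symm hee) hmpos hmpos'
      calc (∑ w, φ p (w, θ')) * (∑ x : Ω × Θ, ψ x.1 * p x)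
          = ∑ θ'' : Θ, (∑ w, φ p (w, θ')) * (∑ w, ψ w * p (w, θ'')) := by
            rw [hD, Finset.mul_sum]
        _ = ∑ θ'' : Θ, (∑ w, φ p (w, θ'')) * (∑ w, ψ w * p (w, θ')) :=
            Finset.sum_congr rfl fun θ'' _ => hpair θ''
        _ = (∑ θ'' : Θ, ∑ w, φ p (w, θ'')) * (∑ w, ψ w * p (w, θ')) :=
            (Finset.sum_mul _ _ _).symm
        _ = ∑ w, ψ w * p (w, θ') := by rw [hsumc, one_mul]
  rcases ((Finset.sum_nonneg fun w _ => hp.1 (w, θ)) : (0:ℝ) ≤ ∑ w, p (w, θ)).eq_or_lt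
    with hm0 | hmpos
  · obtain ⟨_, _, hall⟩ := hzero θ hm0.symm
    rw [(zero_iff hpos hp (ω, θ)).mpr (hall ω), hall ω]
    rw [mul_zero, zero_div]
  · have hW : 0 < ∑ w, ψ w * p (w, θ) := wsum_pos hψ (fun w => hp.1 _) hmpos
    have hcol := col_formula hmap hpos hcoh hmarg θa hab hac hbc hψ hκ hp hmpos ω
    rw [eq_div_iff hDpos.ne']
    have h2 : (φ p (ω, θ) * (∑ x : Ω × Θ, ψ x.1 * p x)) * (∑ w, ψ w * p (w, θ))
        = (ψ ω * p (ω, θ)) * (∑ w, ψ w * p (w, θ)) := by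
      calc (φ p (ω, θ) * (∑ x : Ω × Θ, ψ x.1 * p x)) * (∑ w, ψ w * p (w, θ))
          = (φ p (ω, θ) * (∑ w, ψ w * p (w, θ))) * (∑ x : Ω × Θ, ψ x.1 * p x) := by ring
        _ = ((∑ w, φ p (w, θ)) * (ψ ω * p (ω, θ))) * (∑ x : Ω × Θ, ψ x.1 * p x) := by
            rw [hcol]
        _ = ((∑ w, φ p (w, θ)) * (∑ x : Ω × Θ, ψ x.1 * p x)) * (ψ ω * p (ω, θ)) := by ring
        _ = (∑ w, ψ w * p (w, θ)) * (ψ ω * p (ω, θ)) := by rw [key θ]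
        _ = (ψ ω * p (ω, θ)) * (∑ w, ψ w * p (w, θ)) := by ring
    exact mul_right_cancel₀ hW.ne' h2

end Edge

end Phi

end S10

/-- **Theorem (strongly coherent case)**: if `|Ω| ≥ 3`, `|Θ| ≥ 3` and `φ` satisfies
positivity, continuity, strong signal coherence and marginality, then there is
`ψ : Ω → ℝ₊₊` with `φ(p)(ω,θ) = ψ(ω)p(ω,θ) / Σ_{ω',θ'} ψ(ω')p(ω',θ')`. -/
theorem stmt10 {Ω Θ : Type*} [Fintype Ω] [Fintype Θ] [DecidableEq Θ]
    (hΩ : 3 ≤ Fintype.card Ω) (hΘ : 3 ≤ Fintype.card Θ)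
    (φ : (Ω × Θ → ℝ) → Ω × Θ → ℝ)
    (hmap : ∀ p, IsDist p → IsDist (φ p))
    (hpos : PositiveJoint φ)
    (hcont : ContinuousOn φ {p | IsDist p})
    (hcoh : StrongSignalCoherent φ)
    (hmarg : Marginality φ) :
    ∃ ψ : Ω → ℝ, (∀ ω, 0 < ψ ω) ∧
      ∀ p, IsDist p → ∀ (ω : Ω) (θ : Θ),
        φ p (ω, θ) = ψ ω * p (ω, θ) / ∑ x : Ω × Θ, ψ x.1 * p x := by
  classical
  exact S10.main_formula hΩ hΘ hmap hpos hcont hcoh hmarg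
end
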